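/- arXiv:1705.00181 — 10 statements merged into one kernel-verified Lean document; each statement's English description precedes it below -/
import Mathlib

section
/- Let A be a ring whose lattice of right ideals is distributive (a right distributive ring), and let P₁ ⊂ P₂ ⊂ ... be an infinite strictly ascending chain of completely prime right ideals of A. Then the union X = ⋃ᵢ Pᵢ is a proper completely prime right ideal of A satisfying X = X². -/
open MulOpposite

/-- Deviation (Gabriel–Rentschler Krull dimension) of a preorder is `≤ α`:
in every strictly descending chain, all but finitely many of the
intervals (corresponding to successive factor modules) have deviation `< α`. -/
def DevLE (α : Ordinal.{0}) (P : Type) (inst : Preorder P) : Prop :=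
  ∀ f : ℕ → P, (∀ n : ℕ, inst.lt (f (n + 1)) (f n)) →
    ∃ N : ℕ, ∀ n : ℕ, N ≤ n → ∃ β : Ordinal.{0}, ∃ _ : β < α,
      DevLE β {x : P // inst.le (f (n + 1)) x ∧ inst.le x (f n)}
        (@Subtype.preorder P inst fun x => inst.le (f (n + 1)) x ∧ inst.le x (f n))
termination_by α

/-- A preorder has Krull dimension (deviation) if its deviation exists as an ordinal. -/
def HasKdimO (P : Type) [inst : Preorder P] : Prop := ∃ α : Ordinal.{0}, DevLE α P inst

/-- A module has Gabriel–Rentschler Krull dimension: the deviation of its submodule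
lattice exists (intervals of this lattice are the submodule lattices of the
subquotients, so this agrees with the transfinite definition via factor modules). -/
def ModHasKdim (R M : Type) [Ring R] [AddCommGroup M] [Module R M] : Prop :=
  HasKdimO (Submodule R M)

/-- A complete lattice (of submodules/ideals) is finite-dimensional: it contains no
infinite independent family (direct sum) of nonzero elements. -/
def FinDimL (L : Type) [CompleteLattice L] : Prop :=
  ¬ ∃ f : ℕ → L, (∀ n, f n ≠ ⊥) ∧ ∀ n, f n ⊓ (⨆ m, ⨆ _ : m ≠ n, f m) = ⊥

/-- A ring is right distributive if its lattice of right ideals is distributive. -/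
def RightDistrib (A : Type) [Ring A] : Prop :=
  ∀ X Y Z : Submodule Aᵐᵒᵖ A, X ⊓ (Y ⊔ Z) = X ⊓ Y ⊔ X ⊓ Z

/-- A completely prime right ideal: proper, and `a*b ∉ P` whenever `a, b ∉ P`. -/
def IsCPrimeR {A : Type} [Ring A] (P : Submodule Aᵐᵒᵖ A) : Prop :=
  P ≠ ⊤ ∧ ∀ a b : A, a ∉ P → b ∉ P → a * b ∉ P

/-- The square `X²` of a right ideal: the right ideal generated by products of
two elements of `X`. -/
def sqR {A : Type} [Ring A] (X : Submodule Aᵐᵒᵖ A) : Submodule Aᵐᵒᵖ A :=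
  Submodule.span Aᵐᵒᵖ {z | ∃ x ∈ X, ∃ y ∈ X, z = x * y}

theorem stmt0 (A : Type) [Ring A] (hd : RightDistrib A)
    (P : ℕ → Submodule Aᵐᵒᵖ A) (hchain : StrictMono P)
    (hcp : ∀ n, IsCPrimeR (P n)) :
    IsCPrimeR (⨆ n, P n) ∧ (⨆ n, P n) = sqR (⨆ n, P n) := by
  classical
  have hdir : Directed (· ≤ ·) P := hchain.monotone.directed_le
  have hmem : ∀ x : A, x ∈ (⨆ n, P n) ↔ ∃ n, x ∈ P n := fun x =>
    Submodule.mem_iSup_of_directed P hdir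
  have hmul : ∀ (Q : Submodule Aᵐᵒᵖ A) (x r : A), x ∈ Q → x * r ∈ Q := by
    intro Q x r hx
    simpa [op_smul_eq_mul] using Q.smul_mem (op r) hx
  have hcpc : ∀ (n : ℕ) (x r : A), x ∉ P n → x * r ∈ P n → r ∈ P n := by
    intro n x r hx hxr
    by_contra hr
    exact (hcp n).2 x r hx hr hxr
  refine ⟨⟨?_, ?_⟩, ?_⟩
  · intro htop
    have h1 : (1 : A) ∈ (⨆ n, P n) := htop ▸ Submodule.mem_top
    obtain ⟨n, hn⟩ := (hmem 1).1 h1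
    refine (hcp n).1 (Submodule.eq_top_iff'.mpr fun x => ?_)
    simpa using hmul (P n) 1 x hn
  · intro a b ha hb hab
    obtain ⟨n, hn⟩ := (hmem _).1 hab
    exact (hcp n).2 a b (fun h => ha ((hmem a).2 ⟨n, h⟩))
      (fun h => hb ((hmem b).2 ⟨n, h⟩)) hn
  · apply le_antisymm
    · intro a haX
      obtain ⟨n, han⟩ := (hmem a).1 haX
      obtain ⟨y, hy1, hy0⟩ := SetLike.exists_of_lt (hchain (Nat.lt_succ_self n))
      have hspan_le : Submodule.span Aᵐᵒᵖ {a} ≤ P n :=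
        (Submodule.span_singleton_le_iff_mem a (P n)).2 han
      have hle : Submodule.span Aᵐᵒᵖ {a} ≤
          Submodule.span Aᵐᵒᵖ {a + y} ⊔ Submodule.span Aᵐᵒᵖ {y} := by
        rw [Submodule.span_le, Set.singleton_subset_iff]
        have h1 : a + y ∈ (Submodule.span Aᵐᵒᵖ {a + y} ⊔ Submodule.span Aᵐᵒᵖ {y} :
            Submodule Aᵐᵒᵖ A) :=
          Submodule.mem_sup_left (Submodule.mem_span_singleton_self _)
        have h2 : y ∈ (Submodule.span Aᵐᵒᵖ {a + y} ⊔ Submodule.span Aᵐᵒᵖ {y} :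
            Submodule Aᵐᵒᵖ A) :=
          Submodule.mem_sup_right (Submodule.mem_span_singleton_self _)
        simpa using sub_mem h1 h2
      have heq : Submodule.span Aᵐᵒᵖ {a} =
          (Submodule.span Aᵐᵒᵖ {a} ⊓ Submodule.span Aᵐᵒᵖ {a + y}) ⊔
            (Submodule.span Aᵐᵒᵖ {a} ⊓ Submodule.span Aᵐᵒᵖ {y}) := by
        rw [← hd]
        exact (inf_eq_left.mpr hle).symm
      have haa : a ∈ (Submodule.span Aᵐᵒᵖ {a} ⊓ Submodule.span Aᵐᵒᵖ {a + y}) ⊔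
          (Submodule.span Aᵐᵒᵖ {a} ⊓ Submodule.span Aᵐᵒᵖ {y}) :=
        heq ▸ Submodule.mem_span_singleton_self a
      rcases Submodule.mem_sup.1 haa with ⟨s, hs, t, ht, hst⟩
      obtain ⟨w, hw⟩ := Submodule.mem_span_singleton.1 hs.2
      obtain ⟨c, hc⟩ := Submodule.mem_span_singleton.1 ht.2
      have hwval : (a + y) * w.unop = s := by
        rw [← hw, ← MulOpposite.op_unop w, op_smul_eq_mul]; simp
      have hcval : y * c.unop = t := by
        rw [← hc, ← MulOpposite.op_unop c, op_smul_eq_mul]; simp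
      have hsPn : s ∈ P n := hspan_le hs.1
      have htPn : t ∈ P n := hspan_le ht.1
      -- y * w.unop ∈ P n, hence w.unop ∈ P n
      have hyw : y * w.unop ∈ P n := by
        have : y * w.unop = s - a * w.unop := by
          rw [← hwval, add_mul]; abel
        rw [this]
        exact sub_mem hsPn (hmul (P n) a w.unop han)
      have hwPn : w.unop ∈ P n := hcpc n y w.unop hy0 hyw
      have hcPn : c.unop ∈ P n := hcpc n y c.unop hy0 (hcval ▸ htPn)
      -- now a = s + t, both s and t are products of two elements of the union
      have hXay : a + y ∈ (⨆ n, P n) := (hmem _).2 ⟨n + 1, add_mem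
        ((hchain (Nat.lt_succ_self n)).le han) hy1⟩
      have hXy : y ∈ (⨆ n, P n) := (hmem _).2 ⟨n + 1, hy1⟩
      have hXw : w.unop ∈ (⨆ n, P n) := (hmem _).2 ⟨n, hwPn⟩
      have hXc : c.unop ∈ (⨆ n, P n) := (hmem _).2 ⟨n, hcPn⟩
      have hsgen : s ∈ sqR (⨆ n, P n) :=
        Submodule.subset_span ⟨a + y, hXay, w.unop, hXw, hwval.symm⟩
      have htgen : t ∈ sqR (⨆ n, P n) :=
        Submodule.subset_span ⟨y, hXy, c.unop, hXc, hcval.symm⟩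
      exact hst ▸ add_mem hsgen htgen
    · rw [sqR, Submodule.span_le]
      rintro z ⟨x, hx, y, hy, rfl⟩
      exact hmul _ x y hx
end

section
/- Let A be a right distributive ring with no idempotent proper completely prime right ideal. Then A satisfies the ascending chain condition (maximum condition) on completely prime right ideals. -/
open MulOpposite

theorem stmt1 (A : Type) [Ring A] (hd : RightDistrib A)
    (hno : ∀ P : Submodule Aᵐᵒᵖ A, IsCPrimeR P → sqR P ≠ P) :
    ∀ f : ℕ → Submodule Aᵐᵒᵖ A, Monotone f → (∀ n, IsCPrimeR (f n)) →
      ∃ N : ℕ, ∀ n : ℕ, N ≤ n → f n = f N := by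
  intro f hm hcp
  by_contra hc
  push_neg at hc
  -- Q = union of the chain
  set Q : Submodule Aᵐᵒᵖ A := ⨆ n, f n with hQ
  have hdir : Directed (· ≤ ·) f := hm.directed_le
  have hmem : ∀ a : A, a ∈ Q ↔ ∃ n, a ∈ f n := fun a =>
    Submodule.mem_iSup_of_directed f hdir
  have hfQ : ∀ n, f n ≤ Q := fun n => le_iSup f n
  -- Q is completely prime
  have hQprime : IsCPrimeR Q := by
    constructor
    · intro htop
      have h1 : (1 : A) ∈ Q := htop ▸ Submodule.mem_top
      obtain ⟨n, h1n⟩ := (hmem 1).mp h1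
      exact (hcp n).1 (Submodule.eq_top_iff'.mpr fun x => by
        simpa using Submodule.smul_mem _ (op x) h1n)
    · intro a b ha hb hab
      obtain ⟨n, habn⟩ := (hmem _).mp hab
      exact (hcp n).2 a b (fun h => ha ((hmem a).mpr ⟨n, h⟩))
        (fun h => hb ((hmem b).mpr ⟨n, h⟩)) habn
  -- products of two elements of Q are in sqR Q
  have hprod : ∀ x y : A, x ∈ Q → y ∈ Q → x * y ∈ sqR Q := fun x y hx hy =>
    Submodule.subset_span ⟨x, hx, y, hy, rfl⟩
  -- sqR Q = Q
  apply hno Q hQprime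
  apply le_antisymm
  · rw [sqR, Submodule.span_le]
    rintro z ⟨x, hx, y, hy, rfl⟩
    exact Submodule.smul_mem _ (op y) hx
  · intro a ha
    obtain ⟨n, han⟩ := (hmem a).mp ha
    -- find b ∈ Q \ f n
    obtain ⟨m, hnm, hne⟩ := hc n
    have hlt : f n < f m := lt_of_le_of_ne (hm hnm) (Ne.symm hne)
    obtain ⟨b, hbm, hbn⟩ := SetLike.exists_of_lt hlt
    have hbQ : b ∈ Q := hfQ m hbm
    -- distributivity on span{a+b}, span{a}, span{b}
    have key := hd (Submodule.span Aᵐᵒᵖ {a + b}) (Submodule.span Aᵐᵒᵖ {a})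
      (Submodule.span Aᵐᵒᵖ {b})
    have hab : a + b ∈ Submodule.span Aᵐᵒᵖ {a + b} ⊓
        (Submodule.span Aᵐᵒᵖ {a} ⊔ Submodule.span Aᵐᵒᵖ {b}) := by
      refine ⟨Submodule.mem_span_singleton_self _, ?_⟩
      exact add_mem (Submodule.mem_sup_left (Submodule.mem_span_singleton_self a))
        (Submodule.mem_sup_right (Submodule.mem_span_singleton_self b))
    rw [key] at hab
    obtain ⟨u, hu, v, hv, huv⟩ := Submodule.mem_sup.mp hab
    obtain ⟨rx, hrx⟩ := Submodule.mem_span_singleton.mp hu.1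
    obtain ⟨rc, hrc⟩ := Submodule.mem_span_singleton.mp hu.2
    obtain ⟨ry, hry⟩ := Submodule.mem_span_singleton.mp hv.1
    obtain ⟨rd, hrd⟩ := Submodule.mem_span_singleton.mp hv.2
    set x := rx.unop
    set c := rc.unop
    set d := rd.unop
    have hu' : u = (a + b) * x := hrx.symm
    have huc : u = a * c := hrc.symm
    have hv' : v = b * d := hrd.symm
    -- b*x ∈ f n
    have hbx : b * x ∈ f n := by
      have h1 : a * x + b * x = a * c := by
        have : (a + b) * x = a * c := hu' ▸ huc
        rwa [add_mul] at this
      rw [eq_sub_of_add_eq' h1]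
      exact sub_mem (Submodule.smul_mem _ (op c) han) (Submodule.smul_mem _ (op x) han)
    have hxn : x ∈ f n := by
      by_contra hx
      exact (hcp n).2 b x hbn hx hbx
    -- b*(d-1) ∈ f n
    have hbd1 : b * (d - 1) ∈ f n := by
      have h2 : b * d = a + b - (a * x + b * x) := by
        have : a * x + b * x + b * d = a + b := by
          have := huv; rw [hu', hv', add_mul] at this; exact this
        exact eq_sub_of_add_eq' this
      have heq : b * (d - 1) = a - a * x - b * x := by
        rw [mul_sub, mul_one, h2]; abel
      rw [heq]
      exact sub_mem (sub_mem han (Submodule.smul_mem _ (op x) han)) hbx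
    have hd1 : d - 1 ∈ f n := by
      by_contra hdd
      exact (hcp n).2 b (d - 1) hbn hdd hbd1
    have heq2 : b * (d - 1) = a - a * x - b * x := by
      have h2 : b * d = a + b - (a * x + b * x) := by
        have : a * x + b * x + b * d = a + b := by
          have := huv; rw [hu', hv', add_mul] at this; exact this
        exact eq_sub_of_add_eq' this
      rw [mul_sub, mul_one, h2]; abel
    have hdecomp : a = a * x + b * x + b * (d - 1) := by
      rw [heq2]; abel
    rw [hdecomp]
    exact add_mem (add_mem (hprod a x ha (hfQ n hxn)) (hprod b x hbQ (hfQ n hxn)))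
      (hprod b (d - 1) hbQ (hfQ n hd1))
end

section
/- Let A be a commutative arithmetical ring (the lattice of ideals of A is distributive) with no idempotent proper prime ideal. Then A satisfies the ascending chain condition on prime ideals. -/
open MulOpposite

/-- A commutative ring is arithmetical if its lattice of ideals is distributive. -/
def Arithmetical (A : Type) [CommRing A] : Prop :=
  ∀ I J K : Ideal A, I ⊓ (J ⊔ K) = I ⊓ J ⊔ I ⊓ K

lemma fuchs {A : Type} [CommRing A] (ha : Arithmetical A) (x y : A) :
    ∃ u : A, u * y ∈ Ideal.span {x} ∧ (1 - u) * x ∈ Ideal.span {y} := by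
  have h := ha (Ideal.span {x}) (Ideal.span {x + y}) (Ideal.span {y})
  have hx : x ∈ Ideal.span {x} ⊓ (Ideal.span {x + y} ⊔ Ideal.span {y}) := by
    refine ⟨Ideal.subset_span rfl, ?_⟩
    have hm : (x + y) - y ∈ Ideal.span {x + y} ⊔ Ideal.span {y} :=
      Submodule.sub_mem _ (Ideal.mem_sup_left (Ideal.subset_span rfl))
        (Ideal.mem_sup_right (Ideal.subset_span rfl))
    have heq : (x + y) - y = x := by ring
    rwa [heq] at hm
  rw [h] at hx
  obtain ⟨a, ⟨hax, haxy⟩, b, ⟨hbx, hby⟩, hab⟩ := Submodule.mem_sup.mp hx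
  obtain ⟨u, hu⟩ := Ideal.mem_span_singleton'.mp haxy
  refine ⟨u, ?_, ?_⟩
  · have h1 : u * y = a - u * x := by linear_combination hu
    rw [h1]
    exact Submodule.sub_mem _ hax (Ideal.mul_mem_left _ _ (Ideal.subset_span rfl))
  · have h2 : (1 - u) * x = u * y + b := by linear_combination -hab - hu
    rw [h2]
    exact Submodule.add_mem _ (Ideal.mul_mem_left _ _ (Ideal.subset_span rfl)) hby

theorem stmt2 (A : Type) [CommRing A] (ha : Arithmetical A)
    (hno : ∀ P : Ideal A, P.IsPrime → P * P ≠ P) :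
    ∀ f : ℕ → Ideal A, Monotone f → (∀ n, (f n).IsPrime) →
      ∃ N : ℕ, ∀ n : ℕ, N ≤ n → f n = f N := by
  intro f hf hprime
  by_contra hc
  push_neg at hc
  set P : Ideal A := ⨆ n, f n with hP
  have hdir : Directed (· ≤ ·) f := hf.directed_le
  have hmem : ∀ z : A, z ∈ P ↔ ∃ n, z ∈ f n := fun z => Submodule.mem_iSup_of_directed f hdir
  have hle : ∀ n, f n ≤ P := fun n => le_iSup f n
  have hPP : P ≤ P * P := by
    intro x hx
    obtain ⟨n, hxn⟩ := (hmem x).mp hx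
    obtain ⟨m, hnm, hne⟩ := hc n
    have hlt : f n < f m := lt_of_le_of_ne (hf hnm) (Ne.symm hne)
    obtain ⟨y, hym, hyn⟩ := SetLike.exists_of_lt hlt
    obtain ⟨u, hu1, hu2⟩ := fuchs ha x y
    have hspan : Ideal.span {x} ≤ f n := (Ideal.span_singleton_le_iff_mem _).mpr hxn
    have hu1' : u * y ∈ f n := hspan hu1
    have huP : u ∈ P := hle n (((hprime n).mem_or_mem hu1').resolve_right hyn)
    obtain ⟨c, hcy⟩ := Ideal.mem_span_singleton'.mp hu2
    have hcyfn : c * y ∈ f n := by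
      have : c * y = x - u * x := by linear_combination hcy
      rw [this]
      exact Submodule.sub_mem _ hxn (Ideal.mul_mem_left _ _ hxn)
    have hcP : c ∈ P := hle n (((hprime n).mem_or_mem hcyfn).resolve_right hyn)
    have hxeq : x = u * x + c * y := by linear_combination -hcy
    rw [hxeq]
    exact Ideal.add_mem _ (Ideal.mul_mem_mul huP (hle n hxn))
      (Ideal.mul_mem_mul hcP (hle m hym))
  have hPprime : P.IsPrime := by
    constructor
    · intro htop
      have h1 : (1 : A) ∈ P := htop ▸ Submodule.mem_top
      obtain ⟨n, h1n⟩ := (hmem 1).mp h1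
      exact (hprime n).ne_top ((Ideal.eq_top_iff_one _).mpr h1n)
    · intro a b hab
      obtain ⟨n, h⟩ := (hmem _).mp hab
      rcases (hprime n).mem_or_mem h with h | h
      · exact Or.inl (hle n h)
      · exact Or.inr (hle n h)
  exact hno P hPprime (le_antisymm Ideal.mul_le_left hPP)
end

section
/- Let A be a ring and M a right A-module. Then M is distributive (its lattice of submodules is distributive) if and only if for any two elements x, y ∈ M there exist a, b ∈ A with a + b = 1 such that xaA + ybA ⊆ xA ∩ yA. -/
open MulOpposite

theorem stmt3 (A M : Type) [Ring A] [AddCommGroup M] [Module Aᵐᵒᵖ M] :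
    (∀ X Y Z : Submodule Aᵐᵒᵖ M, X ⊓ (Y ⊔ Z) = X ⊓ Y ⊔ X ⊓ Z) ↔
      ∀ x y : M, ∃ a b : A, a + b = 1 ∧
        Submodule.span Aᵐᵒᵖ {op a • x} ⊔ Submodule.span Aᵐᵒᵖ {op b • y} ≤
          Submodule.span Aᵐᵒᵖ ({x} : Set M) ⊓ Submodule.span Aᵐᵒᵖ ({y} : Set M) := by
  constructor
  · intro h x y
    have hxy : x + y ∈ Submodule.span Aᵐᵒᵖ ({x + y} : Set M) ⊓
        (Submodule.span Aᵐᵒᵖ ({x} : Set M) ⊔ Submodule.span Aᵐᵒᵖ ({y} : Set M)) :=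
      ⟨Submodule.mem_span_singleton_self _,
        add_mem (Submodule.mem_sup_left (Submodule.mem_span_singleton_self _))
          (Submodule.mem_sup_right (Submodule.mem_span_singleton_self _))⟩
    rw [h] at hxy
    obtain ⟨u, hu, v, hv, huv⟩ := Submodule.mem_sup.mp hxy
    obtain ⟨hu1, hu2⟩ := hu
    obtain ⟨hv1, hv2⟩ := hv
    obtain ⟨a, ha⟩ := Submodule.mem_span_singleton.mp hu1
    obtain ⟨b, hb⟩ := Submodule.mem_span_singleton.mp hv1
    have hay : a • y ∈ Submodule.span Aᵐᵒᵖ ({x} : Set M) := by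
      have : a • y = u - a • x := by rw [← ha, smul_add]; abel
      rw [this]
      exact sub_mem hu2 (Submodule.smul_mem _ _ (Submodule.mem_span_singleton_self _))
    have hbx : b • x ∈ Submodule.span Aᵐᵒᵖ ({y} : Set M) := by
      have : b • x = v - b • y := by rw [← hb, smul_add]; abel
      rw [this]
      exact sub_mem hv2 (Submodule.smul_mem _ _ (Submodule.mem_span_singleton_self _))
    have hc : (1 - (a + b)) • (x + y) = 0 := by
      rw [sub_smul, add_smul, one_smul, ha, hb, huv, sub_self]
    have hcy : (1 - (a + b)) • y ∈ Submodule.span Aᵐᵒᵖ ({x} : Set M) := by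
      have : (1 - (a + b)) • y = -((1 - (a + b)) • x) := by
        have := hc; rw [smul_add] at this; linear_combination (norm := abel) this
      rw [this]
      exact neg_mem (Submodule.smul_mem _ _ (Submodule.mem_span_singleton_self _))
    refine ⟨b.unop, 1 - b.unop, by abel, ?_⟩
    apply sup_le
    · rw [Submodule.span_le, Set.singleton_subset_iff]
      refine ⟨Submodule.smul_mem _ _ (Submodule.mem_span_singleton_self _), ?_⟩
      simpa using hbx
    · rw [Submodule.span_le, Set.singleton_subset_iff]
      refine ⟨?_, Submodule.smul_mem _ _ (Submodule.mem_span_singleton_self _)⟩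
      have : op (1 - b.unop) • y = a • y + (1 - (a + b)) • y := by
        rw [← add_smul]
        congr 1
        rw [op_sub, op_one, op_unop]
        abel
      rw [this]
      exact add_mem hay hcy
  · intro h X Y Z
    refine le_antisymm ?_ (sup_le (inf_le_inf_left _ le_sup_left) (inf_le_inf_left _ le_sup_right))
    rintro w ⟨hwX, hwYZ⟩
    obtain ⟨p, hp, q, hq, hpq⟩ := Submodule.mem_sup.mp hwYZ
    obtain ⟨a, b, hab, hle⟩ := h p q
    have hpa : op a • p ∈ Submodule.span Aᵐᵒᵖ ({p} : Set M) ⊓ Submodule.span Aᵐᵒᵖ ({q} : Set M) :=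
      hle (le_sup_left (α := Submodule Aᵐᵒᵖ M) (Submodule.mem_span_singleton_self _))
    have hqb : op b • q ∈ Submodule.span Aᵐᵒᵖ ({p} : Set M) ⊓ Submodule.span Aᵐᵒᵖ ({q} : Set M) :=
      hle (le_sup_right (α := Submodule Aᵐᵒᵖ M) (Submodule.mem_span_singleton_self _))
    have hspanY : Submodule.span Aᵐᵒᵖ ({p} : Set M) ≤ Y := by
      rw [Submodule.span_le, Set.singleton_subset_iff]; exact hp
    have hspanZ : Submodule.span Aᵐᵒᵖ ({q} : Set M) ≤ Z := by
      rw [Submodule.span_le, Set.singleton_subset_iff]; exact hq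
    have hwa : op a • w ∈ X ⊓ Z := by
      refine ⟨Submodule.smul_mem _ _ hwX, ?_⟩
      rw [← hpq, smul_add]
      exact add_mem (hspanZ hpa.2) (Submodule.smul_mem _ _ hq)
    have hwb : op b • w ∈ X ⊓ Y := by
      refine ⟨Submodule.smul_mem _ _ hwX, ?_⟩
      rw [← hpq, smul_add]
      exact add_mem (Submodule.smul_mem _ _ hp) (hspanY hqb.1)
    have : w = op b • w + op a • w := by
      rw [← add_smul, ← op_add]
      rw [show b + a = 1 by rw [add_comm]; exact hab]
      simp
    rw [this]
    exact add_mem (Submodule.mem_sup_left hwb) (Submodule.mem_sup_right hwa)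
end

section
/- Let A be a commutative distributive ring (arithmetical ring) with a completely prime nil ideal P. Then P = xP for every non-zero-divisor x of A. -/
open MulOpposite

/-
Jensen's characterization of arithmetical rings: for all `a, b` there is `d` with
`d a ∈ (b)` and `(1 - d) b ∈ (a)`; it comes from splitting `a + b ∈ (a + b) ⊓ ((a) ⊔ (b))`
by distributivity. Given `p ∈ P` and a non-zero-divisor `x`, which lies outside the nil ideal `P`,
take `a = x`, `b = p`: then `d x ∈ P` forces `d ∈ P`, so `d` is nilpotent and `1 - d` a unit,
whence `x ∣ p`. Writing `p = x q`, primality of `P` gives `q ∈ P`, so `p ∈ xP`.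
-/

namespace Arithmetical

variable {A : Type} [CommRing A]

theorem exists_mul_mem_span_and_one_sub_mul_mem_span (ha : Arithmetical A) (a b : A) :
    ∃ d, d * a ∈ Ideal.span {b} ∧ (1 - d) * b ∈ Ideal.span {a} := by
  have hab : a + b ∈ Ideal.span {a + b} ⊓ (Ideal.span {a} ⊔ Ideal.span {b}) :=
    ⟨Ideal.mem_span_singleton_self _,
      Submodule.add_mem_sup (Ideal.mem_span_singleton_self a) (Ideal.mem_span_singleton_self b)⟩
  rw [ha _ _ _] at hab
  obtain ⟨u, ⟨-, hua⟩, v, ⟨hv, hvb⟩, huv⟩ := Submodule.mem_sup.mp hab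
  obtain ⟨d, rfl⟩ := Ideal.mem_span_singleton'.mp hv
  refine ⟨d, ?_, ?_⟩
  · have hda : d * a = d * (a + b) - d * b := by ring
    rw [hda]
    exact sub_mem hvb (Ideal.mul_mem_left _ d (Ideal.mem_span_singleton_self b))
  · have hdb : (1 - d) * b = u - (1 - d) * a := by linear_combination -huv
    rw [hdb]
    exact sub_mem hua (Ideal.mul_mem_left _ _ (Ideal.mem_span_singleton_self a))

theorem le_span_singleton_of_isPrime_of_notMem (ha : Arithmetical A) {P : Ideal A}
    (hP : P.IsPrime) (hnil : ∀ p ∈ P, IsNilpotent p) {x : A} (hxP : x ∉ P) :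
    P ≤ Ideal.span {x} := by
  intro p hp
  obtain ⟨d, hdx, hdp⟩ := ha.exists_mul_mem_span_and_one_sub_mul_mem_span x p
  have hdP : d ∈ P :=
    (hP.mem_or_mem ((Ideal.span_singleton_le_iff_mem P).mpr hp hdx)).resolve_right hxP
  rw [Ideal.mem_span_singleton] at hdp ⊢
  exact ((hnil d hdP).isUnit_one_sub.dvd_mul_left).mp hdp

end Arithmetical

theorem IsNilpotent.subsingleton_of_mem_nonZeroDivisors {M₀ : Type*} [MonoidWithZero M₀]
    {x : M₀} (hnil : IsNilpotent x) (hx : x ∈ nonZeroDivisors M₀) : Subsingleton M₀ := by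
  obtain ⟨n, hn⟩ := hnil
  have hzero : (0 : M₀) ∈ nonZeroDivisors M₀ := hn ▸ pow_mem hx n
  by_contra hnontriv
  rw [not_subsingleton_iff_nontrivial] at hnontriv
  exact zero_notMem_nonZeroDivisors hzero

theorem Ideal.IsPrime.eq_span_singleton_mul_of_le {A : Type} [CommRing A] {P : Ideal A}
    (hP : P.IsPrime) {x : A} (hxP : x ∉ P) (hle : P ≤ Ideal.span {x}) :
    P = Ideal.span {x} * P := by
  refine le_antisymm (fun p hp ↦ ?_) Ideal.mul_le_right
  obtain ⟨q, rfl⟩ := Ideal.mem_span_singleton'.mp (hle hp)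
  have hq : q ∈ P := (hP.mem_or_mem hp).resolve_right hxP
  rw [mul_comm q x]
  exact Ideal.mul_mem_mul (Ideal.mem_span_singleton_self x) hq

theorem stmt4 (A : Type) [CommRing A] (ha : Arithmetical A)
    (P : Ideal A) (hP : P.IsPrime) (hnil : ∀ p ∈ P, IsNilpotent p)
    (x : A) (hx : ∀ a : A, x * a = 0 → a = 0) :
    P = Ideal.span {x} * P := by
  have hxP : x ∉ P := fun hxP ↦
    have := (hnil x hxP).subsingleton_of_mem_nonZeroDivisors (mem_nonZeroDivisors_iff_left.mpr hx)
    hP.ne_top (Subsingleton.elim P ⊤)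
  exact hP.eq_span_singleton_mul_of_le hxP (ha.le_span_singleton_of_isPrime_of_notMem hP hnil hxP)
end

section
/- Let A be a commutative arithmetical uniform ring such that A modulo its nilradical P is finite-dimensional, and suppose A has no idempotent proper essential ideal. Then the nilradical P is nilpotent. -/
open MulOpposite

/-- A commutative ring is uniform if any two nonzero ideals intersect nontrivially. -/
def UniformRing (A : Type) [CommRing A] : Prop :=
  ∀ I J : Ideal A, I ≠ ⊥ → J ≠ ⊥ → I ⊓ J ≠ ⊥

/-- A commutative ring has no idempotent proper essential ideal. -/
def NoIdemEss (A : Type) [CommRing A] : Prop :=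
  ∀ B : Ideal A, B ≠ ⊤ → (∀ C : Ideal A, C ≠ ⊥ → B ⊓ C ≠ ⊥) → B * B ≠ B

/-!
Modulo the nilradical `P` the ring is reduced and arithmetical, and (lifting idempotents along
the nil ideal `P`) uniformity leaves it no nontrivial idempotents. There a pair `x * y = 0` of
nonzero elements would spawn an infinite family of pairwise orthogonal nonzero elements,
against finite dimensionality; so `P` is prime.

For `s ∉ P` arithmeticity gives `s P = P`, so `P` annihilates the kernel `K` of `A → A_P`
(the torsion ideal `torsion' A A P.primeCompl`). If `P ≤ P² ⊔ K`, then `P² = P³` is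
idempotent, proper, and essential unless zero by uniformity, so `P² = 0`. Otherwise some
`a ∈ P` outside `P² ⊔ K` satisfies `P² ≤ a A`, and `P` is nilpotent because `a` is.
-/

section Reduced

variable {R : Type*} [CommRing R] [IsReduced R]

theorem mul_eq_zero_of_dvd_of_mul_eq_zero {a b c : R} (hab : a * b = 0) (h : b ∣ c * a) :
    c * a = 0 := by
  obtain ⟨d, hd⟩ := h
  exact IsReduced.eq_zero _ ⟨2, by linear_combination (c * a) * hd + (c * d) * hab⟩

theorem mul_eq_zero_of_mul_add_eq_zero {w x y : R} (hxy : x * y = 0) (h : w * (x + y) = 0) :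
    w * x = 0 :=
  IsReduced.eq_zero _ ⟨2, by linear_combination (w * x) * h - w ^ 2 * hxy⟩

theorem exists_pairwise_mul_eq_zero_seq
    (step : ∀ x y : R, x ≠ 0 → y ≠ 0 → x * y = 0 → ∃ z, z ≠ 0 ∧ z * x = 0 ∧ z * y = 0)
    {x y : R} (hx : x ≠ 0) (hy : y ≠ 0) (hxy : x * y = 0) :
    ∃ f : ℕ → R, (∀ n, f n ≠ 0) ∧ Pairwise fun m n => f m * f n = 0 := by
  let S := {p : R × R // p.1 ≠ 0 ∧ p.2 ≠ 0 ∧ p.1 * p.2 = 0}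
  choose z hz0 hzx hzy using step
  -- `(x, y) ↦ (z, x + y)`, where `ann (x + y) = ann x ⊓ ann y` as `x * y = 0` in a reduced ring.
  let next : S → S := fun p => ⟨(z _ _ p.2.1 p.2.2.1 p.2.2.2, p.1.1 + p.1.2), hz0 _ _ _ _ _, by
    intro h
    exact p.2.1 (IsReduced.eq_zero _ ⟨2, by linear_combination p.1.1 * h - p.2.2.2⟩),
    by rw [mul_add, hzx, hzy, add_zero]⟩
  let seq : ℕ → S := fun n => next^[n] ⟨(x, y), hx, hy, hxy⟩
  have hseq : ∀ n, (seq (n + 1)).1.2 = (seq n).1.1 + (seq n).1.2 := fun n =>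
    congrArg (fun p : S => p.1.2) (Function.iterate_succ_apply' next n _)
  have hann : ∀ n w, w * (seq n).1.2 = 0 → ∀ m < n, w * (seq m).1.1 = 0 := by
    intro n
    induction n with
    | zero => intro w _ m hm; omega
    | succ n ih =>
      intro w hw m hm
      rw [hseq] at hw
      rcases Nat.lt_succ_iff_lt_or_eq.mp hm with hm | rfl
      · exact ih w (mul_eq_zero_of_mul_add_eq_zero ((mul_comm _ _).trans (seq n).2.2.2)
          (by rwa [add_comm])) m hm
      · exact mul_eq_zero_of_mul_add_eq_zero (seq m).2.2.2 hw
  have horth : ∀ m n, m < n → (seq m).1.1 * (seq n).1.1 = 0 := fun m n hmn => by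
    rw [mul_comm]; exact hann n _ (seq n).2.2.2 m hmn
  refine ⟨fun n => (seq n).1.1, fun n => (seq n).2.1, fun m n hmn => ?_⟩
  rcases lt_or_gt_of_ne hmn with h | h
  · exact horth m n h
  · rw [mul_comm]; exact horth n m h

end Reduced

theorem not_finDimL_of_pairwise_mul_eq_zero {R : Type} [CommRing R] [IsReduced R] {f : ℕ → R}
    (hf : ∀ n, f n ≠ 0) (horth : Pairwise fun m n => f m * f n = 0) : ¬ FinDimL (Ideal R) := by
  refine fun hfd => hfd ⟨fun n => Ideal.span {f n}, fun n => ?_, fun n => ?_⟩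
  · rw [Ne, Ideal.span_singleton_eq_bot]; exact hf n
  · have hle : (⨆ m, ⨆ _ : m ≠ n, Ideal.span {f m}) ≤ (Ideal.span {f n}).annihilator := by
      refine iSup₂_le fun m hmn => ?_
      rw [Ideal.span_le, Set.singleton_subset_iff, SetLike.mem_coe,
        Ideal.span, Submodule.mem_annihilator_span_singleton]
      exact horth hmn
    refine eq_bot_iff.mpr fun w ⟨hwf, hwann⟩ => ?_
    obtain ⟨d, rfl⟩ := Ideal.mem_span_singleton'.mp hwf
    have := (Submodule.mem_annihilator_span_singleton _ _).mp (hle hwann)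
    exact IsReduced.eq_zero _ ⟨2, by linear_combination d * this⟩

theorem exists_ne_zero_mul_eq_zero_of_mul_eq_zero {R : Type*} [CommRing R]
    (hsplit : ∀ x y : R, x * y = 0 → ∃ s t, s + t = 1 ∧ s * x = 0 ∧ t * y = 0)
    (hidem : ∀ e : R, IsIdempotentElem e → e = 0 ∨ e = 1)
    {x y : R} (hx : x ≠ 0) (hy : y ≠ 0) (hxy : x * y = 0) :
    ∃ z, z ≠ 0 ∧ z * x = 0 ∧ z * y = 0 := by
  obtain ⟨s, t, hst, hsx, hty⟩ := hsplit x y hxy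
  refine ⟨s * t, fun hst0 => ?_, by rw [mul_right_comm, hsx, zero_mul],
    by rw [mul_assoc, hty, mul_zero]⟩
  have hs : IsIdempotentElem s := by
    rw [IsIdempotentElem]; linear_combination s * hst - hst0
  rcases hidem s hs with rfl | rfl
  · exact hy (by rw [← one_mul y, ← hst, zero_add, hty])
  · exact hx (by rw [← one_mul x, hsx])

section Arithmetical

variable {A : Type} [CommRing A]

theorem Arithmetical.exists_add_eq_one_dvd (ha : Arithmetical A) (a b : A) :
    ∃ s t : A, s + t = 1 ∧ b ∣ s * a ∧ a ∣ t * b := by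
  have hmem : a + b ∈ Ideal.span {a + b} ⊓ (Ideal.span {a} ⊔ Ideal.span {b}) :=
    ⟨Ideal.mem_span_singleton_self _,
      add_mem (Ideal.mem_sup_left (Ideal.mem_span_singleton_self _))
        (Ideal.mem_sup_right (Ideal.mem_span_singleton_self _))⟩
  rw [ha] at hmem
  obtain ⟨u, ⟨hu, hua⟩, v, ⟨-, hvb⟩, huv⟩ := Submodule.mem_sup.mp hmem
  obtain ⟨β, rfl⟩ := Ideal.mem_span_singleton'.mp hu
  obtain ⟨α, hα⟩ := Ideal.mem_span_singleton'.mp hua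
  obtain ⟨γ, hγ⟩ := Ideal.mem_span_singleton'.mp hvb
  exact ⟨1 - β, β, sub_add_cancel _ _, ⟨γ - 1 + β, by linear_combination -hγ - huv⟩,
    ⟨α - β, by linear_combination -hα⟩⟩

instance : IsReduced (A ⧸ nilradical A) :=
  (Ideal.isRadical_iff_quotient_reduced _).mp (Ideal.radical_isRadical ⊥)

theorem Arithmetical.exists_add_eq_one_mul_eq_zero (ha : Arithmetical A)
    {x y : A ⧸ nilradical A} (hxy : x * y = 0) :
    ∃ s t, s + t = 1 ∧ s * x = 0 ∧ t * y = 0 := by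
  obtain ⟨a, rfl⟩ := Ideal.Quotient.mk_surjective x
  obtain ⟨b, rfl⟩ := Ideal.Quotient.mk_surjective y
  obtain ⟨s, t, hst, hsa, htb⟩ := ha.exists_add_eq_one_dvd a b
  let π := Ideal.Quotient.mk (nilradical A)
  refine ⟨π s, π t, by rw [← map_add, hst, map_one], ?_, ?_⟩
  · exact mul_eq_zero_of_dvd_of_mul_eq_zero hxy (by simpa only [map_mul] using map_dvd π hsa)
  · exact mul_eq_zero_of_dvd_of_mul_eq_zero (by rwa [mul_comm])
      (by simpa only [map_mul] using map_dvd π htb)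

theorem UniformRing.eq_zero_or_eq_one_of_isIdempotentElem (hu : UniformRing A) {e : A}
    (he : IsIdempotentElem e) : e = 0 ∨ e = 1 := by
  by_contra! h
  refine hu (Ideal.span {e}) (Ideal.span {1 - e})
    (by rw [Ne, Ideal.span_singleton_eq_bot]; exact h.1)
    (by rw [Ne, Ideal.span_singleton_eq_bot, sub_eq_zero]; exact h.2.symm)
    (eq_bot_iff.mpr fun w ⟨hwe, hwe'⟩ => ?_)
  obtain ⟨c, rfl⟩ := Ideal.mem_span_singleton'.mp hwe
  obtain ⟨d, hd⟩ := Ideal.mem_span_singleton'.mp hwe'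
  rw [Ideal.mem_bot]
  linear_combination (-c - d) * he.eq - e * hd

theorem UniformRing.eq_zero_or_eq_one_of_isIdempotentElem_quotient (hu : UniformRing A)
    {e : A ⧸ nilradical A} (he : IsIdempotentElem e) : e = 0 ∨ e = 1 := by
  obtain ⟨e', he', rfl⟩ := (existsUnique_isIdempotentElem_eq_of_ker_isNilpotent
    (Ideal.Quotient.mk (nilradical A))
    (fun x hx => mem_nilradical.mp (by rwa [Ideal.mk_ker] at hx))
    e (Ideal.Quotient.mk_surjective e) he).exists
  rcases hu.eq_zero_or_eq_one_of_isIdempotentElem he' with rfl | rfl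
  · exact Or.inl (map_zero _)
  · exact Or.inr (map_one _)

theorem isPrime_nilradical [Nontrivial A] (ha : Arithmetical A) (hu : UniformRing A)
    (hfd : FinDimL (Ideal (A ⧸ nilradical A))) : (nilradical A).IsPrime := by
  rw [← Ideal.Quotient.isDomain_iff_prime]
  have : Nontrivial (A ⧸ nilradical A) :=
    Ideal.Quotient.nontrivial_iff.mpr
      ((Ideal.ne_top_iff_one _).mpr (mem_nilradical.not.mpr not_isNilpotent_one))
  have : NoZeroDivisors (A ⧸ nilradical A) := ⟨fun {x y} hxy => by
    by_contra! h
    obtain ⟨f, hf0, horth⟩ := exists_pairwise_mul_eq_zero_seq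
      (fun _ _ => exists_ne_zero_mul_eq_zero_of_mul_eq_zero
        (fun _ _ => ha.exists_add_eq_one_mul_eq_zero)
        (fun _ => hu.eq_zero_or_eq_one_of_isIdempotentElem_quotient)) h.1 h.2 hxy
    exact not_finDimL_of_pairwise_mul_eq_zero hf0 horth hfd⟩
  exact NoZeroDivisors.to_isDomain _

theorem NoIdemEss.eq_bot_of_mul_self_eq (hni : NoIdemEss A) (hu : UniformRing A) {B : Ideal A}
    (hB : B ≠ ⊤) (hBB : B * B = B) : B = ⊥ := by
  by_contra hB0
  exact hni B hB (fun C hC => hu B C hB0 hC) hBB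

theorem Arithmetical.dvd_or_exists_not_mem_nilradical (ha : Arithmetical A) (a b : A) :
    b ∣ a ∨ ∃ t ∉ nilradical A, a ∣ t * b := by
  obtain ⟨s, t, hst, hsa, htb⟩ := ha.exists_add_eq_one_dvd a b
  by_cases ht : t ∈ nilradical A
  · have hs : IsUnit s := by
      rw [eq_sub_of_add_eq hst]; exact (mem_nilradical.mp ht).isUnit_one_sub
    exact Or.inl ((hs.dvd_mul_left).mp hsa)
  · exact Or.inr ⟨t, ht, htb⟩

variable [hP : (nilradical A).IsPrime]

theorem Arithmetical.span_singleton_mul_nilradical (ha : Arithmetical A) {s : A}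
    (hs : s ∉ nilradical A) : Ideal.span {s} * nilradical A = nilradical A := by
  refine le_antisymm Ideal.mul_le_right fun x hx => ?_
  rcases ha.dvd_or_exists_not_mem_nilradical x s with ⟨y, rfl⟩ | ⟨t, ht, hts⟩
  · exact Ideal.mem_span_singleton_mul.mpr ⟨y, (hP.mem_or_mem hx).resolve_left hs, rfl⟩
  · exact (hs ((hP.mem_or_mem (Ideal.mem_of_dvd _ hts hx)).resolve_left ht)).elim

theorem Arithmetical.torsion_mul_nilradical (ha : Arithmetical A) :
    Submodule.torsion' A A (nilradical A).primeCompl * nilradical A = ⊥ := by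
  refine eq_bot_iff.mpr (Ideal.mul_le.mpr fun k hk p hp => ?_)
  obtain ⟨⟨s, hs⟩, hsk⟩ := (Submodule.mem_torsion'_iff _ _).mp hk
  rw [← ha.span_singleton_mul_nilradical hs] at hp
  obtain ⟨q, -, rfl⟩ := Ideal.mem_span_singleton_mul.mp hp
  rw [Ideal.mem_bot, ← mul_assoc, mul_comm k, ← smul_eq_mul s k]
  exact (congrArg (· * q) hsk).trans (zero_mul q)

theorem Arithmetical.sq_nilradical_eq_bot_of_le (ha : Arithmetical A) (hu : UniformRing A)
    (hni : NoIdemEss A)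
    (h : nilradical A ≤ nilradical A ^ 2 ⊔ Submodule.torsion' A A (nilradical A).primeCompl) :
    nilradical A ^ 2 = ⊥ := by
  set P := nilradical A
  have hP3 : P ^ 2 * P = P ^ 2 := by
    refine le_antisymm Ideal.mul_le_left ?_
    calc P ^ 2 = P * P := sq P
      _ ≤ (P ^ 2 ⊔ Submodule.torsion' A A P.primeCompl) * P := Ideal.mul_mono_left h
      _ = P ^ 2 * P := by rw [Ideal.sup_mul, ha.torsion_mul_nilradical, sup_bot_eq]
  refine hni.eq_bot_of_mul_self_eq hu
    (ne_top_of_le_ne_top hP.ne_top (Ideal.pow_le_self two_ne_zero)) ?_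
  calc P ^ 2 * P ^ 2 = P ^ 2 * P * P := by rw [mul_assoc, ← sq P]
    _ = P ^ 2 := by rw [hP3, hP3]

theorem Arithmetical.sq_nilradical_le_span_singleton (ha : Arithmetical A) {a : A}
    (haP : a ∈ nilradical A)
    (ha' : a ∉ nilradical A ^ 2 ⊔ Submodule.torsion' A A (nilradical A).primeCompl) :
    nilradical A ^ 2 ≤ Ideal.span {a} := by
  intro y hy
  rcases ha.dvd_or_exists_not_mem_nilradical y a with hay | ⟨t, ht, hyt⟩
  · exact Ideal.mem_span_singleton.mpr hay
  refine absurd ?_ ha'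
  have ht2 : t ^ 2 ∉ nilradical A := fun h => ht (hP.mem_of_pow_mem 2 h)
  rw [← ha.span_singleton_mul_nilradical ht] at haP
  obtain ⟨a₁, -, rfl⟩ := Ideal.mem_span_singleton_mul.mp haP
  rw [← ha.span_singleton_mul_nilradical ht, mul_pow, Ideal.span_singleton_pow] at hy
  obtain ⟨y₁, hy₁, rfl⟩ := Ideal.mem_span_singleton_mul.mp hy
  obtain ⟨c, hc⟩ := hyt
  have hκ : a₁ - c * y₁ ∈ Submodule.torsion' A A (nilradical A).primeCompl :=
    (Submodule.mem_torsion'_iff _ _).mpr ⟨⟨t ^ 2, ht2⟩, by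
      rw [Submonoid.smul_def, smul_eq_mul]; linear_combination hc⟩
  have : t * a₁ = t * (c * y₁) + t * (a₁ - c * y₁) := by ring
  rw [this]
  exact add_mem (Ideal.mem_sup_left (Ideal.mul_mem_left _ _ (Ideal.mul_mem_left _ _ hy₁)))
    (Ideal.mem_sup_right (Ideal.mul_mem_left _ _ hκ))

theorem Arithmetical.exists_pow_nilradical_eq_bot (ha : Arithmetical A) (hu : UniformRing A)
    (hni : NoIdemEss A) : ∃ n : ℕ, 0 < n ∧ nilradical A ^ n = ⊥ := by
  by_cases h :
      nilradical A ≤ nilradical A ^ 2 ⊔ Submodule.torsion' A A (nilradical A).primeCompl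
  · exact ⟨2, two_pos, ha.sq_nilradical_eq_bot_of_le hu hni h⟩
  obtain ⟨a, haP, ha'⟩ := SetLike.not_le_iff_exists.mp h
  obtain ⟨k, hk⟩ := mem_nilradical.mp haP
  refine ⟨2 * (k + 1), by omega, eq_bot_iff.mpr ?_⟩
  calc nilradical A ^ (2 * (k + 1)) = (nilradical A ^ 2) ^ (k + 1) := pow_mul _ _ _
    _ ≤ Ideal.span {a} ^ (k + 1) :=
      Ideal.pow_right_mono (ha.sq_nilradical_le_span_singleton haP ha') _
    _ = ⊥ := by rw [Ideal.span_singleton_pow, pow_succ, hk, zero_mul, Ideal.span_singleton_eq_bot]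

end Arithmetical

theorem stmt6 (A : Type) [CommRing A] (ha : Arithmetical A) (hu : UniformRing A)
    (hfd : FinDimL (Ideal (A ⧸ nilradical A))) (hni : NoIdemEss A) :
    ∃ n : ℕ, 0 < n ∧ nilradical A ^ n = ⊥ := by
  rcases subsingleton_or_nontrivial A with _ | _
  · exact ⟨1, one_pos, Subsingleton.elim _ _⟩
  have := isPrime_nilradical ha hu hfd
  exact ha.exists_pow_nilradical_eq_bot hu hni
end

section
/- Let A be a commutative finite-dimensional reduced arithmetical ring. Then A is isomorphic to a finite direct product of integral domains. -/
open MulOpposite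

/-!
In a reduced ring without infinite direct sums of nonzero ideals, annihilators of nonzero
elements satisfy the ascending chain condition: from a strictly increasing chain
`ann b₀ < ann b₁ < ⋯` one picks `xₙ ∈ ann bₙ₊₁ \ ann bₙ`, and the elements `xₙ bₙ` are
nonzero and pairwise orthogonal. Hence every such annihilator lies in a maximal one; the
maximal ones are prime, have pairwise orthogonal generators (so there are finitely many of
them) and intersect in zero because the ring is reduced. In an arithmetical ring
incomparable primes are comaximal, so the Chinese remainder theorem splits the ring as the
product of its quotients by these finitely many primes, which are domains.
-/

open Submodule

section Annihilators

variable {A : Type*} [CommRing A]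

lemma IsReduced.eq_zero_of_mul_self_eq_zero [IsReduced A] {a : A} (h : a * a = 0) : a = 0 :=
  IsReduced.eq_zero a ⟨2, by rwa [sq]⟩

lemma mem_annihilator_span_singleton_iff {a x : A} :
    x ∈ (A ∙ a).annihilator ↔ x * a = 0 :=
  mem_annihilator_span_singleton a x

lemma annihilator_le_annihilator_mul (a b : A) :
    (A ∙ a).annihilator ≤ (A ∙ (b * a)).annihilator :=
  annihilator_mono (span_singleton_smul_le A b a)

def IsNonzeroAnnihilator (I : Ideal A) : Prop :=
  ∃ a : A, a ≠ 0 ∧ (A ∙ a).annihilator = I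

lemma isPrime_of_maximal_isNonzeroAnnihilator {P : Ideal A}
    (hP : Maximal IsNonzeroAnnihilator P) : P.IsPrime := by
  obtain ⟨a, ha, rfl⟩ := hP.prop
  refine ⟨fun htop => ha ?_, fun {u v} huv => or_iff_not_imp_left.mpr fun hu => ?_⟩
  · simpa using mem_annihilator_span_singleton_iff.mp (htop ▸ mem_top : (1 : A) ∈ _)
  · have hua : u * a ≠ 0 := fun h => hu (mem_annihilator_span_singleton_iff.mpr h)
    have heq := hP.eq_of_ge ⟨u * a, hua, rfl⟩ (annihilator_le_annihilator_mul a u)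
    rw [← heq, mem_annihilator_span_singleton_iff, ← mul_assoc, mul_comm v u]
    exact mem_annihilator_span_singleton_iff.mp huv

lemma mul_eq_zero_of_maximal_isNonzeroAnnihilator {a b : A}
    (ha : Maximal IsNonzeroAnnihilator (A ∙ a).annihilator)
    (hb : Maximal IsNonzeroAnnihilator (A ∙ b).annihilator)
    (hne : (A ∙ a).annihilator ≠ (A ∙ b).annihilator) : a * b = 0 := by
  by_contra hab
  have hab' : IsNonzeroAnnihilator (A ∙ (a * b)).annihilator := ⟨a * b, hab, rfl⟩
  have hle_a : (A ∙ a).annihilator ≤ (A ∙ (a * b)).annihilator := by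
    simpa only [mul_comm] using annihilator_le_annihilator_mul a b
  exact hne ((ha.eq_of_ge hab' hle_a).symm.trans
    (hb.eq_of_ge hab' (annihilator_le_annihilator_mul b a)))

end Annihilators

namespace Arithmetical

variable {A : Type} [CommRing A]

lemma exists_mul_mem_span_singleton (ha : Arithmetical A) (a b : A) :
    ∃ d : A, d * b ∈ Ideal.span {a} ∧ (1 - d) * a ∈ Ideal.span {b} := by
  have hmem : a ∈ Ideal.span {a} ⊓ (Ideal.span {b} ⊔ Ideal.span {a + b}) := by
    refine ⟨Ideal.mem_span_singleton_self a, ?_⟩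
    simpa using sub_mem (mem_sup_right (Ideal.mem_span_singleton_self (a + b)))
      (mem_sup_left (Ideal.mem_span_singleton_self b) :
        b ∈ Ideal.span {b} ⊔ Ideal.span {a + b})
  rw [ha] at hmem
  obtain ⟨x, ⟨-, hxb⟩, y, ⟨hya, hyab⟩, hxy⟩ := mem_sup.mp hmem
  obtain ⟨d, rfl⟩ := Ideal.mem_span_singleton'.mp hyab
  refine ⟨d, ?_, ?_⟩
  · have : d * b = d * (a + b) - d * a := by ring
    rw [this]
    exact sub_mem hya (Ideal.mul_mem_left _ d (Ideal.mem_span_singleton_self a))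
  · rw [show (1 - d) * a = x + d * b by linear_combination -hxy]
    exact add_mem hxb (Ideal.mul_mem_left _ d (Ideal.mem_span_singleton_self b))

/-- That is, the primes contained in a given maximal ideal form a chain. -/
lemma sup_eq_top_of_not_le (ha : Arithmetical A) {P Q : Ideal A} [P.IsPrime] [Q.IsPrime]
    (hPQ : ¬P ≤ Q) (hQP : ¬Q ≤ P) : P ⊔ Q = ⊤ := by
  obtain ⟨a, haP, haQ⟩ := SetLike.not_le_iff_exists.mp hPQ
  obtain ⟨b, hbQ, hbP⟩ := SetLike.not_le_iff_exists.mp hQP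
  obtain ⟨d, hd, hd'⟩ := ha.exists_mul_mem_span_singleton a b
  have hdP : d ∈ P := (Ideal.IsPrime.mem_or_mem ‹_›
    ((Ideal.span_singleton_le_iff_mem P).mpr haP hd)).resolve_right hbP
  have hdQ : 1 - d ∈ Q := (Ideal.IsPrime.mem_or_mem ‹_›
    ((Ideal.span_singleton_le_iff_mem Q).mpr hbQ hd')).resolve_right haQ
  rw [Ideal.eq_top_iff_one, ← add_sub_cancel d 1]
  exact add_mem_sup hdP hdQ

lemma pairwise_isCoprime_maximal_isNonzeroAnnihilator (ha : Arithmetical A) :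
    Pairwise (Function.onFun IsCoprime
      fun P : {P : Ideal A // Maximal IsNonzeroAnnihilator P} => (P : Ideal A)) := by
  intro P Q hPQ
  have := isPrime_of_maximal_isNonzeroAnnihilator P.2
  have := isPrime_of_maximal_isNonzeroAnnihilator Q.2
  exact Ideal.isCoprime_iff_sup_eq.mpr <| ha.sup_eq_top_of_not_le
    (fun h => hPQ (Subtype.ext (P.2.eq_of_le Q.2.prop h)))
    (fun h => hPQ (Subtype.ext (Q.2.eq_of_le P.2.prop h).symm))

end Arithmetical

section FiniteDimensional

variable {A : Type} [CommRing A] [IsReduced A]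

lemma exists_eq_zero_of_pairwise_mul_eq_zero (hfd : FinDimL (Ideal A)) {y : ℕ → A}
    (hy : Pairwise fun m n => y m * y n = 0) : ∃ n, y n = 0 := by
  by_contra! hy0
  refine hfd ⟨fun n => Ideal.span {y n}, fun n => by simpa using hy0 n, fun n => ?_⟩
  have hsup : (⨆ m, ⨆ _ : m ≠ n, Ideal.span {y m}) ≤ (A ∙ y n).annihilator :=
    iSup₂_le fun m hm => (Ideal.span_singleton_le_iff_mem _).mpr
      (mem_annihilator_span_singleton_iff.mpr (hy hm))
  refine eq_bot_iff.mpr fun t ⟨ht, ht'⟩ => ?_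
  obtain ⟨r, rfl⟩ := Ideal.mem_span_singleton'.mp ht
  have htn : r * y n * y n = 0 := mem_annihilator_span_singleton_iff.mp (hsup ht')
  exact (mem_bot A).mpr <| IsReduced.eq_zero_of_mul_self_eq_zero <| by
    linear_combination r * htn

lemma not_strictMono_annihilator (hfd : FinDimL (Ideal A)) (b : ℕ → A) :
    ¬StrictMono fun n => (A ∙ b n).annihilator := by
  intro hmono
  choose x hx hx' using fun n : ℕ => SetLike.exists_of_lt (hmono n.lt_succ_self)
  have horth : ∀ m n, m < n → x m * b n = 0 := fun m n hmn =>
    mem_annihilator_span_singleton_iff.mp (hmono.monotone hmn (hx m))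
  obtain ⟨n, hn⟩ := exists_eq_zero_of_pairwise_mul_eq_zero hfd (y := fun n => x n * b n)
    fun m n hmn => by
      rcases hmn.lt_or_gt with h | h
      · linear_combination (x n * b m) * horth m n h
      · linear_combination (x m * b n) * horth n m h
  exact hx' n (mem_annihilator_span_singleton_iff.mpr hn)

lemma exists_le_maximal_isNonzeroAnnihilator (hfd : FinDimL (Ideal A)) {I : Ideal A}
    (hI : IsNonzeroAnnihilator I) : ∃ P, I ≤ P ∧ Maximal IsNonzeroAnnihilator P := by
  have hwf : {J : Ideal A | IsNonzeroAnnihilator J}.WellFoundedOn (· > ·) := by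
    refine Set.wellFoundedOn_iff_no_descending_seq.mpr fun f hf => ?_
    choose b _ hb using hf
    exact not_strictMono_annihilator hfd b fun m n hmn => by
      simpa only [hb] using f.map_rel_iff.mpr hmn
  obtain ⟨P, ⟨hP, hIP⟩, hmax⟩ := (hwf.subset fun J (hJ : _ ∧ I ≤ J) => hJ.1).exists_maximal
    ⟨I, hI, le_rfl⟩
  exact ⟨P, hIP, hP, fun J hJ hPJ => hmax ⟨hJ, hIP.trans hPJ⟩ hPJ⟩

lemma finite_setOf_maximal_isNonzeroAnnihilator (hfd : FinDimL (Ideal A)) :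
    {P : Ideal A | Maximal IsNonzeroAnnihilator P}.Finite := by
  by_contra hinf
  let e := Set.Infinite.natEmbedding _ hinf
  choose a ha hae using fun n => (e n).2.prop
  have hmax : ∀ n, Maximal IsNonzeroAnnihilator (A ∙ a n).annihilator := fun n =>
    (hae n).symm ▸ (e n).2
  obtain ⟨n, hn⟩ := exists_eq_zero_of_pairwise_mul_eq_zero hfd (y := a) fun m n hmn =>
    mul_eq_zero_of_maximal_isNonzeroAnnihilator (hmax m) (hmax n) fun h =>
      hmn (e.injective (Subtype.ext ((hae m).symm.trans (h.trans (hae n)))))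
  exact ha n hn

lemma iInf_maximal_isNonzeroAnnihilator_eq_bot (hfd : FinDimL (Ideal A)) :
    ⨅ P : {P : Ideal A // Maximal IsNonzeroAnnihilator P}, (P : Ideal A) = ⊥ := by
  refine eq_bot_iff.mpr fun x hx => (mem_bot A).mpr ?_
  by_contra hx0
  obtain ⟨P, hxP, hP⟩ := exists_le_maximal_isNonzeroAnnihilator hfd ⟨x, hx0, rfl⟩
  obtain ⟨b, hb, rfl⟩ := hP.prop
  have hxb : x * b = 0 :=
    mem_annihilator_span_singleton_iff.mp (Ideal.mem_iInf.mp hx ⟨_, hP⟩)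
  refine hb (IsReduced.eq_zero_of_mul_self_eq_zero ?_)
  exact mem_annihilator_span_singleton_iff.mp
    (hxP (mem_annihilator_span_singleton_iff.mpr (by rw [mul_comm, hxb])))

end FiniteDimensional

lemma exists_ringEquiv_pi_isDomain {A : Type} [CommRing A] {ι : Type*} [Finite ι]
    (P : ι → Ideal A) [∀ i, (P i).IsPrime] (hcop : Pairwise (Function.onFun IsCoprime P))
    (hinf : ⨅ i, P i = ⊥) :
    ∃ (n : ℕ) (D : Fin n → Type) (hD : ∀ i, CommRing (D i)),
      (∀ i, letI := hD i; IsDomain (D i)) ∧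
      Nonempty (A ≃+* ((i : Fin n) → D i)) := by
  obtain ⟨n, ⟨e⟩⟩ := Finite.exists_equiv_fin ι
  have hinf' : ⨅ i, P (e.symm i) = ⊥ := e.symm.iInf_comp.trans hinf
  refine ⟨n, fun i => A ⧸ P (e.symm i), fun _ => inferInstance,
    fun _ => Ideal.Quotient.isDomain _, ⟨?_⟩⟩
  exact (RingEquiv.quotientBot A).symm.trans <| (Ideal.quotEquivOfEq hinf'.symm).trans <|
    Ideal.quotientInfRingEquivPiQuotient _ (hcop.comp_of_injective e.symm.injective)

theorem stmt7 (A : Type) [CommRing A] (ha : Arithmetical A)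
    (hred : ∀ a : A, IsNilpotent a → a = 0) (hfd : FinDimL (Ideal A)) :
    ∃ (n : ℕ) (D : Fin n → Type) (hD : ∀ i, CommRing (D i)),
      (∀ i, letI := hD i; IsDomain (D i)) ∧
      Nonempty (A ≃+* ((i : Fin n) → D i)) := by
  have : IsReduced A := ⟨hred⟩
  have : Finite {P : Ideal A // Maximal IsNonzeroAnnihilator P} :=
    (finite_setOf_maximal_isNonzeroAnnihilator hfd).to_subtype
  have : ∀ P : {P : Ideal A // Maximal IsNonzeroAnnihilator P}, (P : Ideal A).IsPrime :=
    fun P => isPrime_of_maximal_isNonzeroAnnihilator P.2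
  exact exists_ringEquiv_pi_isDomain _ ha.pairwise_isCoprime_maximal_isNonzeroAnnihilator
    (iInf_maximal_isNonzeroAnnihilator_eq_bot hfd)
end

section
/- Every module with Krull dimension is finite-dimensional, i.e., contains no infinite direct sum of nonzero submodules. -/
open MulOpposite

/-- Deviation transfers along order isomorphisms. -/
lemma devLE_of_orderIso : ∀ (α : Ordinal.{0}) {P Q : Type} [instP : Preorder P]
    [instQ : Preorder Q] (_ : P ≃o Q), DevLE α Q instQ → DevLE α P instP := by
  intro α
  induction α using Ordinal.induction with
  | h α IH =>
    intro P Q instP instQ e h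
    rw [DevLE] at h ⊢
    intro f hf
    obtain ⟨N, hN⟩ := h (fun n => e (f n)) (fun n => e.strictMono (hf n))
    refine ⟨N, fun n hn => ?_⟩
    obtain ⟨β, hβ, hd⟩ := hN n hn
    refine ⟨β, hβ, IH β hβ ?_ hd⟩
    exact
      { toFun := fun x => ⟨e x.1, e.le_iff_le.2 x.2.1, e.le_iff_le.2 x.2.2⟩
        invFun := fun y => ⟨e.symm y.1,
          by simpa using e.symm.le_iff_le.2 y.2.1,
          by simpa using e.symm.le_iff_le.2 y.2.2⟩
        left_inv := fun x => by simp
        right_inv := fun y => by simp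
        map_rel_iff' := e.le_iff_le }

lemma keyC (R M : Type) [Ring R] [AddCommGroup M] [Module R M] :
    ∀ α : Ordinal.{0}, ∀ a b : Submodule R M,
      DevLE α {x : Submodule R M // a ≤ x ∧ x ≤ b} (Subtype.preorder _) →
      ¬ ∃ f : ℕ → Submodule R M, (∀ n, a < f n ∧ f n ≤ b) ∧
        (∀ n, f n ⊓ (⨆ m, ⨆ _ : m ≠ n, f m) ≤ a) := by
  intro α
  induction α using Ordinal.induction with
  | h α IH =>
    rintro a b hdev ⟨f, hf, hind⟩
    -- the descending chain
    set S : ℕ → Submodule R M := fun n => a ⊔ ⨆ m, ⨆ k, f (Nat.pair (m + n) k) with hS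
    have hfb : ∀ j, f j ≤ b := fun j => (hf j).2
    have hab : a ≤ b := (hf 0).1.le.trans (hf 0).2
    have hSb : ∀ n, S n ≤ b := fun n =>
      sup_le hab (iSup_le fun m => iSup_le fun k => hfb _)
    have haS : ∀ n, a ≤ S n := fun n => le_sup_left
    have hmem : ∀ n k, f (Nat.pair n k) ≤ S n := by
      intro n k
      refine le_trans ?_ (le_sup_right : _ ≤ S n)
      have := le_iSup₂ (f := fun m k => f (Nat.pair (m + n) k)) 0 k
      simpa using this
    have hSle : ∀ n, S (n + 1) ≤ S n := by
      intro n
      refine sup_le_sup_left ?_ a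
      refine iSup_le fun m => iSup_le fun k => ?_
      refine le_iSup_of_le (m + 1) (le_iSup_of_le k (le_of_eq ?_))
      congr 2
      omega
    -- S (n+1) avoids any index of the form pair n' k' with n' ≤ n
    have hkey : ∀ n i, (∀ m k, Nat.pair (m + (n + 1)) k ≠ i) →
        S (n + 1) ≤ ⨆ j, ⨆ _ : j ≠ i, f j := by
      intro n i hne
      refine sup_le ?_ ?_
      · exact le_trans (hf (i + 1)).1.le
          (le_iSup₂ (f := fun j (_ : j ≠ i) => f j) (i + 1) (Nat.succ_ne_self i))
      · exact iSup_le fun m => iSup_le fun k =>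
          le_iSup₂ (f := fun j (_ : j ≠ i) => f j) (Nat.pair (m + (n + 1)) k) (hne m k)
    have hpairne : ∀ n k m k', Nat.pair (m + (n + 1)) k' ≠ Nat.pair n k := by
      intro n k m k' h
      have := (Nat.pair_eq_pair.1 h).1
      omega
    have hSlt : ∀ n, S (n + 1) < S n := by
      intro n
      refine (hSle n).lt_of_ne fun h => ?_
      have h1 : f (Nat.pair n 0) ≤ S (n + 1) := h ▸ hmem n 0
      have h2 : f (Nat.pair n 0) ≤ a := by
        refine le_trans (le_inf le_rfl ?_) (hind (Nat.pair n 0))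
        exact h1.trans (hkey n _ (fun m k' => hpairne n 0 m k'))
      exact (hf (Nat.pair n 0)).1.not_ge h2
    -- apply DevLE
    rw [DevLE] at hdev
    obtain ⟨N, hN⟩ := hdev (fun n => ⟨S n, haS n, hSb n⟩)
      (fun n => show S (n + 1) < S n from hSlt n)
    obtain ⟨β, hβ, hd⟩ := hN N le_rfl
    -- transfer to an interval of the submodule lattice
    have hd' : DevLE β {x : Submodule R M // S (N + 1) ≤ x ∧ x ≤ S N}
        (Subtype.preorder _) := by
      refine devLE_of_orderIso β ?_ hd
      exact
        { toFun := fun x => ⟨⟨x.1, (haS (N + 1)).trans x.2.1, x.2.2.trans (hSb N)⟩,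
            x.2.1, x.2.2⟩
          invFun := fun y => ⟨y.1.1, y.2.1, y.2.2⟩
          left_inv := fun x => rfl
          right_inv := fun y => rfl
          map_rel_iff' := Iff.rfl }
    -- the new independent family inside the interval
    refine IH β hβ (S (N + 1)) (S N) hd' ⟨fun k => S (N + 1) ⊔ f (Nat.pair N k), ?_, ?_⟩
    · intro k
      constructor
      · refine lt_of_le_of_ne le_sup_left fun h => ?_
        have h1 : f (Nat.pair N k) ≤ S (N + 1) := h ▸ le_sup_right
        have h2 : f (Nat.pair N k) ≤ a := by
          refine le_trans (le_inf le_rfl ?_) (hind (Nat.pair N k))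
          exact h1.trans (hkey N _ (fun m k' => hpairne N k m k'))
        exact absurd h2 (hf (Nat.pair N k)).1.not_ge
      · exact sup_le (hSle N) (hmem N k)
    · intro k
      have hX : (⨆ m, ⨆ _ : m ≠ k, (S (N + 1) ⊔ f (Nat.pair N m))) ≤
          (⨆ j, ⨆ _ : j ≠ Nat.pair N k, f j) ⊔ S (N + 1) := by
        refine iSup_le fun m => iSup_le fun hm => sup_le le_sup_right ?_
        refine le_trans (le_iSup₂ (f := fun j (_ : j ≠ Nat.pair N k) => f j)
          (Nat.pair N m) ?_) le_sup_left
        intro h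
        exact hm (Nat.pair_eq_pair.1 h).2
      refine le_trans (inf_le_inf_left _ hX) ?_
      have hmod : (S (N + 1) ⊔ f (Nat.pair N k)) ⊓
          ((⨆ j, ⨆ _ : j ≠ Nat.pair N k, f j) ⊔ S (N + 1)) =
          S (N + 1) ⊔ (f (Nat.pair N k) ⊓
            ((⨆ j, ⨆ _ : j ≠ Nat.pair N k, f j) ⊔ S (N + 1))) :=
        sup_inf_assoc_of_le _ le_sup_right
      rw [hmod]
      refine sup_le le_rfl ?_
      have h3 : (⨆ j, ⨆ _ : j ≠ Nat.pair N k, f j) ⊔ S (N + 1) ≤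
          ⨆ j, ⨆ _ : j ≠ Nat.pair N k, f j :=
        sup_le le_rfl (hkey N _ (fun m k' => hpairne N k m k'))
      refine le_trans (inf_le_inf_left _ h3) ?_
      exact le_trans (hind (Nat.pair N k)) (haS (N + 1))

theorem stmt9 (R M : Type) [Ring R] [AddCommGroup M] [Module R M]
    (h : ModHasKdim R M) : FinDimL (Submodule R M) := by
  obtain ⟨α, hα⟩ := h
  rintro ⟨f, h1, h2⟩
  have hdev : DevLE α {x : Submodule R M // (⊥ : Submodule R M) ≤ x ∧ x ≤ ⊤}
      (Subtype.preorder _) := by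
    refine devLE_of_orderIso α ?_ hα
    exact
      { toFun := fun x => x.1
        invFun := fun y => ⟨y, bot_le, le_top⟩
        left_inv := fun x => rfl
        right_inv := fun y => rfl
        map_rel_iff' := Iff.rfl }
  exact keyC R M α ⊥ ⊤ hdev
    ⟨f, fun n => ⟨bot_lt_iff_ne_bot.2 (h1 n), le_top⟩, fun n => (h2 n).le⟩
end

section
/- Let A be a ring in which all cyclic right A-modules are finite-dimensional, and let P₁, ..., Pₙ be ideals of A such that each cyclic right A-module A/Pᵢ has Krull dimension. Then the ring A/(P₁ ⋯ Pₙ) has right Krull dimension. -/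
open MulOpposite

/-- A right ideal is two-sided if it is also closed under left multiplication. -/
def IsTwoSidedR {A : Type} [Ring A] (I : Submodule Aᵐᵒᵖ A) : Prop :=
  ∀ a ∈ I, ∀ b : A, b * a ∈ I

/-- A prime (two-sided) ideal of a ring, element-wise characterization. -/
def IsPrime2 {A : Type} [Ring A] (P : Submodule Aᵐᵒᵖ A) : Prop :=
  IsTwoSidedR P ∧ P ≠ ⊤ ∧ ∀ a b : A, (∀ x : A, a * x * b ∈ P) → a ∈ P ∨ b ∈ P

/-- The product `P 0 ⋯ P (n-1)` of a finite family of (two-sided) ideals, as the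
right ideal generated by products of elements, one from each ideal. -/
def prodRIdeal {A : Type} [Ring A] {n : ℕ} (P : Fin n → Submodule Aᵐᵒᵖ A) :
    Submodule Aᵐᵒᵖ A :=
  Submodule.span Aᵐᵒᵖ
    {x | ∃ g : Fin n → A, (∀ i, g i ∈ P i) ∧ x = (List.ofFn g).prod}

namespace Aux10


def dval : List Bool → ℚ
  | [] => 1/2
  | b :: s => ((cond b 1 0) + dval s) / 2

lemma dval_nil : dval [] = 1/2 := rfl
lemma dval_cons_false (s : List Bool) : dval (false :: s) = dval s / 2 := by
  show ((0:ℚ) + dval s)/2 = _ ; ring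
lemma dval_cons_true (s : List Bool) : dval (true :: s) = (1 + dval s) / 2 := rfl

lemma dval_pos : ∀ s, 0 < dval s ∧ dval s < 1 := by
  intro s; induction s with
  | nil => norm_num [dval_nil]
  | cons b s ih =>
    cases b
    · rw [dval_cons_false]; constructor <;> linarith [ih.1, ih.2]
    · rw [dval_cons_true]; constructor <;> linarith [ih.1, ih.2]

def Dyad (q : ℚ) : Prop := (∃ (n : ℕ) (k : ℤ), q = (k : ℚ) / 2 ^ n) ∧ 0 ≤ q ∧ q ≤ 1

lemma two_pow_ne (n : ℕ) : ((2:ℚ)^n) ≠ 0 := by positivity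

lemma dval_dyad : ∀ s, Dyad (dval s) := by
  intro s
  refine ⟨?_, le_of_lt (dval_pos s).1, le_of_lt (dval_pos s).2⟩
  induction s with
  | nil => exact ⟨1, 1, by norm_num [dval_nil]⟩
  | cons b s ih =>
    obtain ⟨n, k, hk⟩ := ih
    cases b
    · exact ⟨n+1, k, by rw [dval_cons_false, hk, pow_succ, div_div]⟩
    · exact ⟨n+1, 2^n + k, by
        rw [dval_cons_true, hk]; push_cast
        rw [pow_succ, ← div_div, add_div ((2:ℚ)^n) ((k:ℚ)) ((2:ℚ)^n),
          div_self (two_pow_ne n)]⟩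

lemma dval_surj : ∀ (n : ℕ) (q : ℚ), (∃ k : ℤ, q = (k:ℚ)/2^n) → 0 < q → q < 1 →
    ∃ s, dval s = q := by
  intro n
  induction n with
  | zero =>
    rintro q ⟨k, rfl⟩ h0 h1
    simp only [pow_zero, div_one] at h0 h1
    exfalso
    have hk1 : (1:ℤ) ≤ k := by exact_mod_cast h0
    have : (1:ℚ) ≤ (k:ℚ) := by exact_mod_cast hk1
    linarith
  | succ n ih =>
    rintro q ⟨k, rfl⟩ h0 h1
    set q : ℚ := (k:ℚ)/2^(n+1) with hq
    rcases lt_trichotomy q (1/2) with h | h | h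
    · obtain ⟨s, hs⟩ := ih (2*q) ⟨k, by rw [hq, pow_succ]; ring⟩
        (by linarith) (by linarith)
      exact ⟨false :: s, by rw [dval_cons_false, hs]; ring⟩
    · exact ⟨[], by rw [dval_nil, h]⟩
    · obtain ⟨s, hs⟩ := ih (2*q - 1)
        ⟨k - 2^n, by
          push_cast
          rw [hq, pow_succ, sub_div, div_self (two_pow_ne n)]; ring⟩
        (by linarith) (by linarith)
      exact ⟨true :: s, by rw [dval_cons_true, hs]; ring⟩

lemma exists_dval_between {a b : ℚ} (ha : Dyad a) (hb : Dyad b) (hab : a < b) :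
    ∃ s, a < dval s ∧ dval s < b := by
  obtain ⟨⟨n, k, hk⟩, ha0, _⟩ := ha
  obtain ⟨⟨m, j, hj⟩, _, hb1⟩ := hb
  have hmid : ∃ r : ℤ, (a + b)/2 = (r:ℚ)/2^(n+m+1) := by
    refine ⟨k * 2^m + j * 2^n, ?_⟩
    rw [hk, hj]; push_cast
    rw [div_add_div _ _ (two_pow_ne n) (two_pow_ne m), div_div, pow_succ, pow_add]
    ring
  obtain ⟨s, hs⟩ := dval_surj (n+m+1) ((a+b)/2) hmid (by linarith) (by linarith)
  exact ⟨s, by rw [hs]; constructor <;> linarith⟩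


open Classical in
noncomputable def emb (a b : ℚ) : List Bool → List Bool
  | [] => if h : ∃ s, a < dval s ∧ dval s < b then Classical.choose h else []
  | false :: s => emb a (dval (emb a b [])) s
  | true :: s => emb (dval (emb a b [])) b s
termination_by s => s.length
decreasing_by all_goals simp [Nat.lt_succ_iff]

lemma emb_nil_spec {a b : ℚ} (ha : Dyad a) (hb : Dyad b) (h : a < b) :
    a < dval (emb a b []) ∧ dval (emb a b []) < b := by
  have he : ∃ s, a < dval s ∧ dval s < b := exists_dval_between ha hb h
  simp only [emb, dif_pos he]
  exact Classical.choose_spec he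

lemma emb_cons_false (a b : ℚ) (s : List Bool) :
    emb a b (false :: s) = emb a (dval (emb a b [])) s := by
  simp only [emb]

lemma emb_cons_true (a b : ℚ) (s : List Bool) :
    emb a b (true :: s) = emb (dval (emb a b [])) b s := by
  simp only [emb]

lemma emb_spec : ∀ (s : List Bool) {a b : ℚ}, Dyad a → Dyad b → a < b →
    a < dval (emb a b s) ∧ dval (emb a b s) < b := by
  intro s
  induction s with
  | nil => intro a b ha hb h; exact emb_nil_spec ha hb h
  | cons c s ih =>
    intro a b ha hb h
    have hn := emb_nil_spec ha hb h
    have hmd : Dyad (dval (emb a b [])) := dval_dyad _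
    cases c
    · rw [emb_cons_false]
      have := ih ha hmd hn.1
      exact ⟨this.1, lt_trans this.2 hn.2⟩
    · rw [emb_cons_true]
      have := ih hmd hb hn.2
      exact ⟨lt_trans hn.1 this.1, this.2⟩

lemma emb_mono : ∀ (s t : List Bool) {a b : ℚ}, Dyad a → Dyad b → a < b →
    dval s < dval t → dval (emb a b s) < dval (emb a b t) := by
  intro s
  induction s with
  | nil =>
    intro t a b ha hb h hst
    have hn := emb_nil_spec ha hb h
    have hmd : Dyad (dval (emb a b [])) := dval_dyad _
    match t with
    | [] => exact absurd hst (lt_irrefl _)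
    | false :: t' =>
      exfalso
      rw [dval_nil, dval_cons_false] at hst
      linarith [(dval_pos t').2]
    | true :: t' =>
      rw [emb_cons_true]
      exact (emb_spec t' hmd hb hn.2).1
  | cons c s ih =>
    intro t a b ha hb h hst
    have hn := emb_nil_spec ha hb h
    have hmd : Dyad (dval (emb a b [])) := dval_dyad _
    cases c
    · match t with
      | [] =>
        rw [emb_cons_false]
        exact (emb_spec s ha hmd hn.1).2
      | false :: t' =>
        rw [emb_cons_false, emb_cons_false]
        rw [dval_cons_false, dval_cons_false] at hst
        exact ih t' ha hmd hn.1 (by linarith)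
      | true :: t' =>
        rw [emb_cons_false, emb_cons_true]
        exact lt_trans (emb_spec s ha hmd hn.1).2 (emb_spec t' hmd hb hn.2).1
    · match t with
      | [] =>
        exfalso
        rw [dval_nil, dval_cons_true] at hst
        linarith [(dval_pos s).1]
      | false :: t' =>
        exfalso
        rw [dval_cons_true, dval_cons_false] at hst
        linarith [(dval_pos s).1, (dval_pos t').2]
      | true :: t' =>
        rw [emb_cons_true, emb_cons_true]
        rw [dval_cons_true, dval_cons_true] at hst
        exact ih t' hmd hb hn.2 (by linarith)

end Aux10

namespace Aux10

section Dev

def DChain (P : Type) [Preorder P] : Prop :=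
  ∃ g : List Bool → P, ∀ s t, dval s < dval t → g s < g t

def GoodI (P : Type) (inst : Preorder P) : Prop := ∃ α : Ordinal.{0}, DevLE α P inst

lemma devLE_transfer : ∀ (α : Ordinal.{0}) {P Q : Type} [iP : Preorder P] [iQ : Preorder Q]
    (g : P → Q), (∀ x y : P, x ≤ y → g x ≤ g y) →
    (∀ x y : P, x ≤ y → g y ≤ g x → y ≤ x) →
    DevLE α Q iQ → DevLE α P iP := by
  intro α
  induction α using Ordinal.induction with
  | h α IH =>
    intro P Q iP iQ g hmono hrefl hQ
    rw [DevLE.eq_def] at hQ ⊢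
    intro f hf
    have hgf : ∀ n, g (f (n+1)) < g (f n) := by
      intro n
      rcases lt_iff_le_not_ge.mp (hf n) with ⟨hle, hnle⟩
      exact lt_iff_le_not_ge.mpr ⟨hmono _ _ hle, fun hc => hnle (hrefl _ _ hle hc)⟩
    obtain ⟨N, hN⟩ := hQ (fun n => g (f n)) hgf
    refine ⟨N, fun n hn => ?_⟩
    obtain ⟨β, hβ, hdev⟩ := hN n hn
    refine ⟨β, hβ, IH β hβ
      (fun x : {x : P // f (n+1) ≤ x ∧ x ≤ f n} =>
        (⟨g x.1, hmono _ _ x.2.1, hmono _ _ x.2.2⟩ :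
          {y : Q // g (f (n+1)) ≤ y ∧ y ≤ g (f n)}))
      (fun x y hxy => ?_) (fun x y hxy hyx => ?_) hdev⟩
    · exact hmono _ _ hxy
    · exact hrefl _ _ hxy hyx

lemma not_devLE_of_dchain : ∀ (α : Ordinal.{0}) {P : Type} [iP : Preorder P],
    DChain P → ¬ DevLE α P iP := by
  have dval_rep_app : ∀ (n : ℕ) (w : List Bool),
      dval (List.replicate n false ++ w) = dval w / 2^n := by
    intro n
    induction n with
    | zero => intro w; simp
    | succ n ih =>
      intro w
      rw [List.replicate_succ, List.cons_append, dval_cons_false, ih, pow_succ, div_div]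
  intro α
  induction α using Ordinal.induction with
  | h α IH =>
    rintro P iP ⟨g, hg⟩ hdev
    rw [DevLE.eq_def] at hdev
    have hrep : ∀ n : ℕ,
        dval (List.replicate (n+1) false) < dval (List.replicate n false) := by
      intro n
      rw [List.replicate_succ, dval_cons_false]
      linarith [(dval_pos (List.replicate n false)).1]
    obtain ⟨N, hN⟩ := hdev (fun n => g (List.replicate n false)) (fun n => hg _ _ (hrep n))
    obtain ⟨β, hβ, hdevβ⟩ := hN N le_rfl
    have key : ∀ u : List Bool,
        dval (List.replicate (N+1) false) < dval (List.replicate (N+1) false ++ true :: u)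
        ∧ dval (List.replicate (N+1) false ++ true :: u) < dval (List.replicate N false) := by
      intro u
      have h1 : dval (List.replicate (N+1) false) = (1/2) / 2^(N+1) := by
        have := dval_rep_app (N+1) []
        simpa [dval_nil] using this
      have h2 : dval (List.replicate N false) = (1/2) / 2^N := by
        have := dval_rep_app N []
        simpa [dval_nil] using this
      have h3 : dval (List.replicate (N+1) false ++ true :: u)
          = ((1 + dval u)/2) / 2^(N+1) := by rw [dval_rep_app, dval_cons_true]
      have hu := dval_pos u
      have hp : (0:ℚ) < 2^(N+1) := by positivity
      have h2' : dval (List.replicate N false) = 1 / 2^(N+1) := by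
        rw [h2, div_div, ← pow_succ']
      constructor
      · rw [h1, h3]
        exact (div_lt_div_iff_of_pos_right hp).mpr (by linarith [hu.1])
      · rw [h2', h3]
        exact (div_lt_div_iff_of_pos_right hp).mpr (by linarith [hu.2])
    refine IH β hβ ⟨fun u =>
      ⟨g (List.replicate (N+1) false ++ true :: u),
        le_of_lt (hg _ _ (key u).1), le_of_lt (hg _ _ (key u).2)⟩, ?_⟩ hdevβ
    intro s t hst
    have : dval (List.replicate (N+1) false ++ true :: s)
        < dval (List.replicate (N+1) false ++ true :: t) := by
      rw [dval_rep_app, dval_rep_app, dval_cons_true, dval_cons_true]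
      have hp : (0:ℚ) < 2^(N+1) := by positivity
      exact (div_lt_div_iff_of_pos_right hp).mpr (by linarith)
    exact Subtype.mk_lt_mk.mpr (hg _ _ this)

lemma good_of_chains (P : Type) [iP : Preorder P]
    (H : ∀ f : ℕ → P, (∀ n, f (n+1) < f n) → ∃ N, ∀ n, N ≤ n →
      GoodI {x : P // f (n+1) ≤ x ∧ x ≤ f n} (Subtype.preorder _)) :
    GoodI P iP := by
  classical
  set F : P × P → Ordinal.{0} := fun p =>
    if h : GoodI {x : P // p.1 ≤ x ∧ x ≤ p.2} (Subtype.preorder _)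
    then Classical.choose h else 0 with hF
  refine ⟨Order.succ (⨆ p, F p), ?_⟩
  rw [DevLE.eq_def]
  intro f hf
  obtain ⟨N, hN⟩ := H f hf
  refine ⟨N, fun n hn => ?_⟩
  have hg := hN n hn
  refine ⟨F (f (n+1), f n), ?_, ?_⟩
  · exact lt_of_le_of_lt (le_ciSup (Ordinal.bddAbove_range _) (f (n+1), f n))
      (Order.lt_succ _)
  · simp only [hF, dif_pos hg]
    exact Classical.choose_spec hg

lemma exists_bad_chain {P : Type} [iP : Preorder P] (h : ¬ GoodI P iP) :
    ∃ f : ℕ → P, (∀ n, f (n+1) < f n) ∧ ∀ N, ∃ n, N ≤ n ∧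
      ¬ GoodI {x : P // f (n+1) ≤ x ∧ x ≤ f n} (Subtype.preorder _) := by
  by_contra hc
  push_neg at hc
  exact h (good_of_chains P (fun f hf => by
    rcases hc f hf with ⟨N, hN⟩
    exact ⟨N, fun n hn => hN n hn⟩))

lemma chain_desc {P : Type} [iP : Preorder P] {f : ℕ → P}
    (hf : ∀ n, f (n+1) < f n) : ∀ k n, k ≤ n → f n ≤ f k := by
  intro k n hkn
  induction n with
  | zero => cases Nat.le_zero.mp hkn; exact le_rfl
  | succ n ih =>
    rcases Nat.lt_or_ge k (n+1) with h | h
    · exact le_trans (le_of_lt (hf n)) (ih (Nat.lt_succ_iff.mp h))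
    · cases le_antisymm hkn h; exact le_rfl

def BadPr {P : Type} (iP : Preorder P) (a b : P) : Prop :=
  iP.lt a b ∧ ¬ GoodI {x : P // iP.le a x ∧ iP.le x b} (Subtype.preorder _)

lemma exists_bad_pr {P : Type} [iP : Preorder P] (h : ¬ GoodI P iP) :
    ∃ a b : P, BadPr iP a b := by
  obtain ⟨f, hf, hbad⟩ := exists_bad_chain h
  obtain ⟨n, -, hn⟩ := hbad 0
  exact ⟨f (n+1), f n, hf n, hn⟩

lemma bad_split {P : Type} [iP : Preorder P] {x y : P} (h : BadPr iP x y) :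
    ∃ l1 l2 u1 u2 : P, x ≤ l1 ∧ l2 ≤ u1 ∧ u2 ≤ y ∧
      BadPr iP l1 l2 ∧ BadPr iP u1 u2 := by
  obtain ⟨hxy, hbad⟩ := h
  obtain ⟨f, hf, hbadn⟩ := exists_bad_chain hbad
  obtain ⟨n1, -, hn1⟩ := hbadn 0
  obtain ⟨n2, hn2ge, hn2⟩ := hbadn (n1+1)
  have desc := chain_desc hf
  -- convert badness of intervals in the subtype to badness in P
  have conv : ∀ m : ℕ,
      ¬ GoodI {x' : {z : P // x ≤ z ∧ z ≤ y} // f (m+1) ≤ x' ∧ x' ≤ f m}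
          (Subtype.preorder _) →
      BadPr iP (f (m+1)).1 (f m).1 := by
    intro m hm
    refine ⟨Subtype.mk_lt_mk.mp (hf m), fun hgood => hm ?_⟩
    obtain ⟨α, hα⟩ := hgood
    refine ⟨α, devLE_transfer α
      (fun w => (⟨w.1.1, w.2.1, w.2.2⟩ :
        {z : P // (f (m+1)).1 ≤ z ∧ z ≤ (f m).1}))
      (fun a b hab => hab) (fun a b hab hba => hba) hα⟩
  refine ⟨(f (n2+1)).1, (f n2).1, (f (n1+1)).1, (f n1).1,
    (f (n2+1)).2.1, desc (n1+1) n2 hn2ge, (f n1).2.2, conv n2 hn2, conv n1 hn1⟩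

section Tree

variable {P : Type} [iP : Preorder P]

noncomputable def splitQ (r : P × P) : (P × P) × (P × P) := by
  classical
  exact if h : BadPr iP r.1 r.2 then
    (((bad_split h).choose, (bad_split h).choose_spec.choose),
     ((bad_split h).choose_spec.choose_spec.choose,
      (bad_split h).choose_spec.choose_spec.choose_spec.choose))
  else (r, r)

lemma splitQ_spec {r : P × P} (h : BadPr iP r.1 r.2) :
    r.1 ≤ (splitQ r).1.1 ∧ (splitQ r).1.2 ≤ (splitQ r).2.1 ∧ (splitQ r).2.2 ≤ r.2 ∧
    BadPr iP (splitQ r).1.1 (splitQ r).1.2 ∧ BadPr iP (splitQ r).2.1 (splitQ r).2.2 := by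
  have spec := (bad_split h).choose_spec.choose_spec.choose_spec.choose_spec
  simp only [splitQ, dif_pos h]
  exact spec

noncomputable def treeF (r : P × P) : List Bool → P × P
  | [] => r
  | false :: s => treeF (splitQ r).1 s
  | true :: s => treeF (splitQ r).2 s

noncomputable def treeVal (r : P × P) : P := (splitQ r).2.1

lemma treeF_nil (r : P × P) : treeF r [] = r := rfl
lemma treeF_ff (r : P × P) (s : List Bool) : treeF r (false :: s) = treeF (splitQ r).1 s := rfl
lemma treeF_tt (r : P × P) (s : List Bool) : treeF r (true :: s) = treeF (splitQ r).2 s := rfl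

lemma treeVal_mem {r : P × P} (h : BadPr iP r.1 r.2) :
    ∀ s, (BadPr iP (treeF r s).1 (treeF r s).2) ∧
      r.1 < treeVal (treeF r s) ∧ treeVal (treeF r s) < r.2 := by
  intro s
  induction s generalizing r with
  | nil =>
    obtain ⟨h1, h2, h3, hbl, hbu⟩ := splitQ_spec h
    exact ⟨h, lt_of_le_of_lt h1 (lt_of_lt_of_le hbl.1 h2),
      lt_of_lt_of_le hbu.1 h3⟩
  | cons c s ih =>
    obtain ⟨h1, h2, h3, hbl, hbu⟩ := splitQ_spec h
    cases c
    · rw [treeF_ff]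
      obtain ⟨hb, hlo, hhi⟩ := ih hbl
      exact ⟨hb, lt_of_le_of_lt h1 hlo,
        lt_of_lt_of_le hhi (le_trans h2 (le_trans (le_of_lt hbu.1) h3))⟩
    · rw [treeF_tt]
      obtain ⟨hb, hlo, hhi⟩ := ih hbu
      exact ⟨hb, lt_of_le_of_lt (le_trans h1 (le_trans (le_of_lt hbl.1) h2)) hlo,
        lt_of_lt_of_le hhi h3⟩

lemma dval_ff_lt (s t : List Bool) :
    dval (false :: s) < dval (false :: t) ↔ dval s < dval t := by
  rw [dval_cons_false, dval_cons_false]; constructor <;> intro <;> linarith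

lemma dval_tt_lt (s t : List Bool) :
    dval (true :: s) < dval (true :: t) ↔ dval s < dval t := by
  rw [dval_cons_true, dval_cons_true]; constructor <;> intro <;> linarith

lemma treeVal_mono {r : P × P} (h : BadPr iP r.1 r.2) :
    ∀ s t, dval s < dval t → treeVal (treeF r s) < treeVal (treeF r t) := by
  intro s
  induction s generalizing r with
  | nil =>
    intro t hst
    obtain ⟨h1, h2, h3, hbl, hbu⟩ := splitQ_spec h
    match t with
    | [] => exact absurd hst (lt_irrefl _)
    | false :: t' =>
      exfalso
      rw [dval_nil, dval_cons_false] at hst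
      linarith [(dval_pos t').2]
    | true :: t' =>
      rw [treeF_nil, treeF_tt]
      exact (treeVal_mem hbu t').2.1
  | cons c s ih =>
    intro t hst
    obtain ⟨h1, h2, h3, hbl, hbu⟩ := splitQ_spec h
    cases c
    · match t with
      | [] =>
        rw [treeF_nil, treeF_ff]
        exact lt_of_lt_of_le (treeVal_mem hbl s).2.2 h2
      | false :: t' =>
        rw [treeF_ff, treeF_ff]
        exact ih hbl t' ((dval_ff_lt s t').mp hst)
      | true :: t' =>
        rw [treeF_ff, treeF_tt]
        exact lt_of_lt_of_le (treeVal_mem hbl s).2.2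
          (le_trans h2 (le_of_lt (treeVal_mem hbu t').2.1))
    · match t with
      | [] =>
        exfalso
        rw [dval_nil, dval_cons_true] at hst
        linarith [(dval_pos s).1]
      | false :: t' =>
        exfalso
        rw [dval_cons_true, dval_cons_false] at hst
        linarith [(dval_pos s).1, (dval_pos t').2]
      | true :: t' =>
        rw [treeF_tt, treeF_tt]
        exact ih hbu t' ((dval_tt_lt s t').mp hst)

lemma dchain_of_not_good (h : ¬ GoodI P iP) : DChain P := by
  obtain ⟨a, b, hb⟩ := exists_bad_pr h
  have hb' : BadPr iP ((a,b) : P × P).1 ((a,b) : P × P).2 := hb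
  exact ⟨fun s => treeVal (treeF (a,b) s), fun s t hst => treeVal_mono hb' s t hst⟩

end Tree

end Dev

section Modules

variable {A : Type} [Ring A]

lemma subval_lt {L : Type} [Preorder L] {p : L → Prop} {x y : {z : L // p z}}
    (h : x < y) : x.1 < y.1 := h

def lmul (a : A) : A →ₗ[Aᵐᵒᵖ] A where
  toFun x := a * x
  map_add' := mul_add a
  map_smul' m x := by
    simp only [MulOpposite.smul_eq_mul_unop, RingHom.id_apply]
    rw [← mul_assoc]

lemma span_singleton_eq_range (a : A) :
    Submodule.span Aᵐᵒᵖ {a} = LinearMap.range (lmul a) := by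
  ext x
  rw [Submodule.mem_span_singleton]
  constructor
  · rintro ⟨c, rfl⟩
    exact ⟨c.unop, rfl⟩
  · rintro ⟨y, rfl⟩
    exact ⟨MulOpposite.op y, rfl⟩

lemma smul_op_eq (q x : A) : MulOpposite.op q • x = x * q := rfl

lemma no_dchain_above (I : Submodule Aᵐᵒᵖ A)
    (h : HasKdimO (Submodule Aᵐᵒᵖ (A ⧸ I))) :
    ¬ DChain {x : Submodule Aᵐᵒᵖ A // I ≤ x} := by
  rintro ⟨g, hg⟩
  obtain ⟨α, hα⟩ := h
  refine not_devLE_of_dchain α ⟨fun s => Submodule.map I.mkQ (g s).1, ?_⟩ hα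
  intro s t hst
  have hlt : (g s).1 < (g t).1 := subval_lt (hg s t hst)
  refine lt_of_le_of_ne (Submodule.map_mono hlt.le) (fun he => ?_)
  have h2 := congrArg (Submodule.comap I.mkQ) he
  rw [Submodule.comap_map_mkQ, Submodule.comap_map_mkQ,
    sup_eq_right.mpr (g s).2, sup_eq_right.mpr (g t).2] at h2
  exact hlt.ne h2

lemma good_quot_of_no_dchain (I : Submodule Aᵐᵒᵖ A)
    (h : ¬ DChain {x : Submodule Aᵐᵒᵖ A // I ≤ x}) :
    HasKdimO (Submodule Aᵐᵒᵖ (A ⧸ I)) := by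
  by_contra hng
  have hng' : ¬ GoodI (Submodule Aᵐᵒᵖ (A ⧸ I)) _ := hng
  obtain ⟨g, hg⟩ := dchain_of_not_good hng'
  have hmc : ∀ X : Submodule Aᵐᵒᵖ (A ⧸ I),
      Submodule.map I.mkQ (Submodule.comap I.mkQ X) = X := fun X =>
    Submodule.map_comap_eq_self (by rw [Submodule.range_mkQ]; exact le_top)
  refine h ⟨fun s => ⟨Submodule.comap I.mkQ (g s), Submodule.le_comap_mkQ _ _⟩, ?_⟩
  intro s t hst
  have hlt := hg s t hst
  have : Submodule.comap I.mkQ (g s) < Submodule.comap I.mkQ (g t) := by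
    refine lt_of_le_of_ne (Submodule.comap_mono hlt.le) (fun he => ?_)
    have h2 := congrArg (Submodule.map I.mkQ) he
    rw [hmc, hmc] at h2
    exact hlt.ne h2
  exact Subtype.mk_lt_mk.mpr this

structure EngSt (A : Type) [Ring A] (K J : Submodule Aᵐᵒᵖ A) where
  c : List Bool → Submodule Aᵐᵒᵖ A
  mono : ∀ s t, dval s < dval t → c s < c t
  lb : ∀ s, K ≤ c s
  ub : ∀ s, c s ≤ J

lemma eng_step {K J Q : Submodule Aᵐᵒᵖ A}
    (hQch : ¬ DChain {x : Submodule Aᵐᵒᵖ A // Q ≤ x})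
    (hJQ : ∀ a ∈ J, ∀ q ∈ Q, a * q ∈ K) (S : EngSt A K J) :
    ∃ (S' : EngSt A K J) (B T W : Submodule Aᵐᵒᵖ A),
      (∀ s, B < S'.c s ∧ S'.c s < W) ∧ T ⊓ W = B ∧ ¬ T ≤ B ∧
      (∃ w, T ≤ S.c w) ∧ (∃ w, B = S.c w) ∧ (∃ w, W = S.c w) := by
  have d1 : dval [false, false] < dval [false] := by
    simp only [dval_cons_false, dval_nil]; norm_num
  have d2 : dval [false] < dval [] := by
    simp only [dval_cons_false, dval_nil]; norm_num
  obtain ⟨a, haX3, haX2⟩ := SetLike.exists_of_lt (S.mono [false] [] d2)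
  set c : Submodule Aᵐᵒᵖ A := Submodule.span Aᵐᵒᵖ {a} with hc
  have hac : a ∈ c := Submodule.mem_span_singleton_self a
  have hcX3 : c ≤ S.c [] := by
    rw [hc, Submodule.span_le, Set.singleton_subset_iff]; exact haX3
  have haJ : a ∈ J := S.ub [] haX3
  by_cases hdi : ∃ u v : List Bool,
      (dval [false,false] < dval u) ∧ (dval u < dval v) ∧ (dval v < dval [false]) ∧
      S.c u ⊓ c = S.c v ⊓ c
  · obtain ⟨u, v, hu1, huv, hv2, heq⟩ := hdi
    have hDu : Dyad (dval u) := dval_dyad u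
    have hDv : Dyad (dval v) := dval_dyad v
    have huf : dval u < dval [false] := huv.trans hv2
    have hun : dval u < dval [] := huf.trans d2
    refine ⟨⟨fun w => S.c (emb (dval u) (dval v) w),
        fun s t hst => S.mono _ _ (emb_mono s t hDu hDv huv hst),
        fun s => S.lb _, fun s => S.ub _⟩,
      S.c u, c ⊔ S.c u, S.c v, ?_, ?_, ?_, ⟨[], ?_⟩, ⟨u, rfl⟩, ⟨v, rfl⟩⟩
    · intro s
      have hsp := emb_spec s hDu hDv huv
      exact ⟨S.mono _ _ hsp.1, S.mono _ _ hsp.2⟩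
    · have hBW : S.c u ≤ S.c v := (S.mono u v huv).le
      rw [sup_comm, sup_inf_assoc_of_le _ hBW]
      have h5 : c ⊓ S.c v ≤ S.c u := by
        rw [inf_comm, ← heq]; exact inf_le_left
      exact sup_eq_left.mpr h5
    · intro hle
      exact haX2 ((S.mono u [false] huf).le (hle (Submodule.mem_sup_left hac)))
    · exact sup_le hcX3 (S.mono u [] hun).le
  · exfalso
    push_neg at hdi
    apply hQch
    have hD1 : Dyad (dval [false,false]) := dval_dyad _
    have hD2 : Dyad (dval [false]) := dval_dyad _
    set e := emb (dval [false,false]) (dval [false]) with he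
    have hbnd : ∀ w, dval [false,false] < dval (e w) ∧ dval (e w) < dval [false] :=
      fun w => emb_spec w hD1 hD2 d1
    have hrange : ∀ w, S.c (e w) ⊓ c ≤ LinearMap.range (lmul a) :=
      fun w => le_trans inf_le_right (le_of_eq (span_singleton_eq_range a))
    refine ⟨fun w => ⟨Submodule.comap (lmul a) (S.c (e w) ⊓ c), ?_⟩, ?_⟩
    · intro q hq
      refine Submodule.mem_comap.mpr (Submodule.mem_inf.mpr ⟨?_, ?_⟩)
      · exact S.lb (e w) (hJQ a haJ q hq)
      · exact c.smul_mem (MulOpposite.op q) hac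
    · intro s t hst
      have hee : dval (e s) < dval (e t) := emb_mono s t hD1 hD2 d1 hst
      have hne : S.c (e s) ⊓ c ≠ S.c (e t) ⊓ c :=
        hdi (e s) (e t) (hbnd s).1 hee (hbnd t).2
      have hle : S.c (e s) ⊓ c ≤ S.c (e t) ⊓ c :=
        inf_le_inf_right c (S.mono _ _ hee).le
      refine Subtype.mk_lt_mk.mpr
        (lt_of_le_of_ne (Submodule.comap_mono hle) fun hcm => hne ?_)
      have h1 := congrArg (Submodule.map (lmul a)) hcm
      rwa [Submodule.map_comap_eq_self (hrange s),
        Submodule.map_comap_eq_self (hrange t)] at h1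

lemma engine {K J Q : Submodule Aᵐᵒᵖ A}
    (hQch : ¬ DChain {x : Submodule Aᵐᵒᵖ A // Q ≤ x})
    (hJQ : ∀ a ∈ J, ∀ q ∈ Q, a * q ∈ K)
    (hfd : ∀ I : Submodule Aᵐᵒᵖ A, FinDimL (Submodule Aᵐᵒᵖ (A ⧸ I)))
    (S0 : EngSt A K J) : False := by
  classical
  let nxt : EngSt A K J →
      EngSt A K J × (Submodule Aᵐᵒᵖ A × Submodule Aᵐᵒᵖ A × Submodule Aᵐᵒᵖ A) :=
    fun S => ⟨(eng_step hQch hJQ S).choose,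
      (eng_step hQch hJQ S).choose_spec.choose,
      (eng_step hQch hJQ S).choose_spec.choose_spec.choose,
      (eng_step hQch hJQ S).choose_spec.choose_spec.choose_spec.choose⟩
  let st : ℕ → EngSt A K J := fun k => Nat.recAux S0 (fun _ S => (nxt S).1) k
  let B : ℕ → Submodule Aᵐᵒᵖ A := fun k => (nxt (st k)).2.1
  let T : ℕ → Submodule Aᵐᵒᵖ A := fun k => (nxt (st k)).2.2.1
  let W : ℕ → Submodule Aᵐᵒᵖ A := fun k => (nxt (st k)).2.2.2
  have spec : ∀ k, (∀ s, B k < (st (k+1)).c s ∧ (st (k+1)).c s < W k) ∧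
      T k ⊓ W k = B k ∧ ¬ T k ≤ B k ∧
      (∃ w, T k ≤ (st k).c w) ∧ (∃ w, B k = (st k).c w) ∧ (∃ w, W k = (st k).c w) := by
    intro k
    exact (eng_step hQch hJQ (st k)).choose_spec.choose_spec.choose_spec.choose_spec
  have hWdec : ∀ k, W (k+1) < W k := by
    intro k
    obtain ⟨w, hw⟩ := (spec (k+1)).2.2.2.2.2
    rw [hw]; exact ((spec k).1 w).2
  have hWle : ∀ i j, i ≤ j → W j ≤ W i := by
    intro i j hij
    induction j with
    | zero => cases Nat.le_zero.mp hij; exact le_rfl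
    | succ j ih =>
      rcases Nat.lt_or_ge i (j+1) with h | h
      · exact (hWdec j).le.trans (ih (Nat.lt_succ_iff.mp h))
      · cases le_antisymm hij h; exact le_rfl
  have hBinc : ∀ k, B k < B (k+1) := by
    intro k
    obtain ⟨w, hw⟩ := (spec (k+1)).2.2.2.2.1
    rw [hw]; exact ((spec k).1 w).1
  have hBle : ∀ i j, i ≤ j → B i ≤ B j := by
    intro i j hij
    induction j with
    | zero => cases Nat.le_zero.mp hij; exact le_rfl
    | succ j ih =>
      rcases Nat.lt_or_ge i (j+1) with h | h
      · exact le_trans (ih (Nat.lt_succ_iff.mp h)) (hBinc j).le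
      · cases le_antisymm hij h; exact le_rfl
  have hBWself : ∀ k, B k < W k := by
    intro k
    exact lt_trans ((spec k).1 []).1 ((spec k).1 []).2
  have hBW : ∀ j k, B j ≤ W k := by
    intro j k
    rcases le_total j k with h | h
    · exact le_trans (hBle j k h) (hBWself k).le
    · exact le_trans (hBWself j).le (hWle k j h)
  have hTW : ∀ k, T (k+1) ≤ W k := by
    intro k
    obtain ⟨w, hw⟩ := (spec (k+1)).2.2.2.1
    exact hw.trans ((spec k).1 w).2.le
  set Bw : Submodule Aᵐᵒᵖ A := ⨆ k, B k with hBwdef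
  have hBwW : ∀ k, Bw ≤ W k := fun k => iSup_le fun j => hBW j k
  have hBBw : ∀ k, B k ≤ Bw := fun k => le_iSup B k
  have hTBw : ∀ k, T k ⊓ Bw ≤ B k := by
    intro k
    calc T k ⊓ Bw ≤ T k ⊓ W k := inf_le_inf_left _ (hBwW k)
    _ = B k := (spec k).2.1
  have hTnBw : ∀ k, ¬ T k ≤ Bw := by
    intro k h
    exact (spec k).2.2.1 (le_trans (le_inf le_rfl h) (hTBw k))
  -- peeling
  let G : ℕ → ℕ → Submodule Aᵐᵒᵖ A :=
    fun k i => Bw ⊔ ⨆ m, ⨆ _ : i ≤ m ∧ m ≠ k, T m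
  have hGle : ∀ k i, G k (i+1) ≤ W i := by
    intro k i
    refine sup_le (hBwW i) (iSup_le fun m => iSup_le fun hm => ?_)
    match m, hm with
    | m+1, hm => exact (hTW m).trans (hWle i m (by omega))
  have hGmono : ∀ k i, G k (i+1) ≤ G k i := by
    intro k i
    refine sup_le le_sup_left (iSup_le fun m => iSup_le fun hm => ?_)
    exact le_sup_of_le_right (le_iSup_of_le m (le_iSup (fun _ => T m) ⟨by omega, hm.2⟩))
  have hGsucc : ∀ k i, i ≠ k → G k i = T i ⊔ G k (i+1) := by
    intro k i hik
    refine le_antisymm ?_ ?_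
    · refine sup_le (le_sup_of_le_right le_sup_left) (iSup_le fun m => iSup_le fun hm => ?_)
      rcases eq_or_ne m i with rfl | hmi
      · exact le_sup_left
      · exact le_sup_of_le_right
          (le_sup_of_le_right (le_iSup_of_le m (le_iSup (fun _ => T m) ⟨by omega, hm.2⟩)))
    · refine sup_le ?_ (hGmono k i)
      exact le_sup_of_le_right (le_iSup_of_le i (le_iSup (fun _ => T i) ⟨le_rfl, hik⟩))
  have hGk : ∀ k, G k k = G k (k+1) := by
    intro k
    refine le_antisymm ?_ (hGmono k k)
    refine sup_le le_sup_left (iSup_le fun m => iSup_le fun hm => ?_)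
    exact le_sup_of_le_right (le_iSup_of_le m (le_iSup (fun _ => T m) ⟨by omega, hm.2⟩))
  have peel : ∀ k d, (Bw ⊔ T k) ⊓ G k (k+1-d) ≤ Bw := by
    intro k d
    induction d with
    | zero =>
      have h1 : (Bw ⊔ T k) ⊓ G k (k+1-0) ≤ (Bw ⊔ T k) ⊓ W k := by
        simp only [Nat.sub_zero]
        exact inf_le_inf_left _ (hGle k k)
      refine h1.trans ?_
      rw [sup_inf_assoc_of_le _ (hBwW k), (spec k).2.1]
      exact sup_le le_rfl (hBBw k)
    | succ d ih =>
      rcases Nat.le_total (k+1) d with hd | hd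
      · have : k+1-(d+1) = k+1-d := by omega
        rw [this]; exact ih
      · rcases Nat.eq_or_lt_of_le hd with hd' | hd'
        · -- d = k+1 : k+1-(d+1) = 0, k+1-d = 0
          have : k+1-(d+1) = k+1-d := by omega
          rw [this]; exact ih
        · -- d ≤ k
          have hdk : d ≤ k := by omega
          obtain ⟨i, hi1, hi2⟩ : ∃ i, k+1-(d+1) = i ∧ i+1 = k+1-d :=
            ⟨k - d, by omega, by omega⟩
          rw [hi1]
          rcases eq_or_ne i k with hik | hik
          · have h3 : k+1 = k+1-d := by omega
            rw [hik, hGk k, h3]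
            exact ih
          · have hiklt : i < k := by omega
            have hXW : Bw ⊔ T k ≤ W i := by
              refine sup_le (hBwW i) ?_
              have hk1 : k = (k-1)+1 := by omega
              rw [hk1]
              exact (hTW (k-1)).trans (hWle i (k-1) (by omega))
            have hmod : W i ⊓ (T i ⊔ G k (i+1)) = G k (i+1) := by
              rw [inf_comm, sup_comm, sup_inf_assoc_of_le _ (hGle k i), (spec i).2.1]
              exact sup_eq_left.mpr ((hBBw i).trans le_sup_left)
            calc (Bw ⊔ T k) ⊓ G k i
                = (Bw ⊔ T k) ⊓ (T i ⊔ G k (i+1)) := by rw [hGsucc k i hik]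
              _ = ((Bw ⊔ T k) ⊓ W i) ⊓ (T i ⊔ G k (i+1)) := by
                  rw [inf_eq_left.mpr hXW]
              _ = (Bw ⊔ T k) ⊓ (W i ⊓ (T i ⊔ G k (i+1))) := inf_assoc _ _ _
              _ = (Bw ⊔ T k) ⊓ G k (i+1) := by rw [hmod]
              _ ≤ Bw := by rw [hi2]; exact ih
  -- finite-dimensionality contradiction
  have hmc : ∀ Z : Submodule Aᵐᵒᵖ (A ⧸ Bw),
      Submodule.map Bw.mkQ (Submodule.comap Bw.mkQ Z) = Z := fun Z =>
    Submodule.map_comap_eq_self (by rw [Submodule.range_mkQ]; exact le_top)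
  have hmapinf : ∀ X Y : Submodule Aᵐᵒᵖ A,
      Submodule.map Bw.mkQ X ⊓ Submodule.map Bw.mkQ Y
        = Submodule.map Bw.mkQ ((Bw ⊔ X) ⊓ (Bw ⊔ Y)) := by
    intro X Y
    conv_lhs => rw [← hmc (Submodule.map Bw.mkQ X ⊓ Submodule.map Bw.mkQ Y)]
    rw [Submodule.comap_inf, Submodule.comap_map_mkQ, Submodule.comap_map_mkQ]
  refine hfd Bw ⟨fun k => Submodule.map Bw.mkQ (T k), fun k => ?_, fun k => ?_⟩
  · intro hbot
    refine hTnBw k ?_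
    have h2 : Submodule.map Bw.mkQ (T k) ≤ ⊥ := le_of_eq hbot
    have h3 := Submodule.map_le_iff_le_comap.mp h2
    rwa [Submodule.comap_bot, Submodule.ker_mkQ] at h3
  · have hsup : (⨆ m, ⨆ _ : m ≠ k, Submodule.map Bw.mkQ (T m))
        = Submodule.map Bw.mkQ (⨆ m, ⨆ _ : m ≠ k, T m) := by
      simp only [Submodule.map_iSup]
    rw [hsup, hmapinf]
    have h0 : G k 0 = Bw ⊔ ⨆ m, ⨆ _ : m ≠ k, T m := by
      refine congrArg (Bw ⊔ ·) (le_antisymm ?_ ?_)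
      · exact iSup_le fun m => iSup_le fun hm =>
          le_iSup_of_le m (le_iSup (fun _ => T m) hm.2)
      · exact iSup_le fun m => iSup_le fun hm =>
          le_iSup_of_le m (le_iSup (fun _ => T m) ⟨Nat.zero_le m, hm⟩)
    have hple : (Bw ⊔ T k) ⊓ (Bw ⊔ ⨆ m, ⨆ _ : m ≠ k, T m) ≤ Bw := by
      rw [← h0]
      have := peel k (k+1)
      rwa [Nat.sub_self] at this
    refine le_bot_iff.mp ?_
    calc Submodule.map Bw.mkQ ((Bw ⊔ T k) ⊓ (Bw ⊔ ⨆ m, ⨆ _ : m ≠ k, T m))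
        ≤ Submodule.map Bw.mkQ Bw := Submodule.map_mono hple
      _ = ⊥ := Submodule.mkQ_map_self _

lemma dval_f_lt_nil : dval [false] < dval [] := by
  simp only [dval_cons_false, dval_nil]; norm_num

lemma prodRIdeal_zero (P : Fin 0 → Submodule Aᵐᵒᵖ A) : prodRIdeal P = ⊤ := by
  rw [eq_top_iff]
  intro x _
  have h1 : (1:A) ∈ {x | ∃ g : Fin 0 → A, (∀ i, g i ∈ P i) ∧ x = (List.ofFn g).prod} :=
    ⟨Fin.elim0, fun i => i.elim0, by simp⟩
  have h2 : (1:A) ∈ prodRIdeal P := Submodule.subset_span h1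
  have hx : x = MulOpposite.op x • (1:A) := by rw [op_smul_eq_mul, one_mul]
  rw [hx]
  exact Submodule.smul_mem _ _ h2

lemma prodRIdeal_succ_le {n : ℕ} (P : Fin (n+1) → Submodule Aᵐᵒᵖ A) :
    prodRIdeal P ≤ prodRIdeal (fun i : Fin n => P i.castSucc) := by
  rw [prodRIdeal, Submodule.span_le]
  rintro x ⟨g, hg, rfl⟩
  have hsplit : (List.ofFn g).prod
      = (List.ofFn fun i : Fin n => g i.castSucc).prod * g (Fin.last n) := by
    rw [List.ofFn_succ', List.prod_concat]
  have hgen : (List.ofFn fun i : Fin n => g i.castSucc).prod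
      ∈ prodRIdeal (fun i : Fin n => P i.castSucc) :=
    Submodule.subset_span ⟨fun i => g i.castSucc, fun i => hg _, rfl⟩
  have : (List.ofFn g).prod
      = MulOpposite.op (g (Fin.last n)) • (List.ofFn fun i : Fin n => g i.castSucc).prod := by
    rw [op_smul_eq_mul, ← hsplit]
  rw [SetLike.mem_coe, this]
  exact Submodule.smul_mem _ _ hgen

lemma prodRIdeal_mul_last {n : ℕ} (P : Fin (n+1) → Submodule Aᵐᵒᵖ A)
    (h2s : ∀ i, IsTwoSidedR (P i)) :
    ∀ a ∈ prodRIdeal (fun i : Fin n => P i.castSucc), ∀ q ∈ P (Fin.last n),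
      a * q ∈ prodRIdeal P := by
  intro a ha
  induction ha using Submodule.span_induction with
  | mem x hx =>
    obtain ⟨g, hg, rfl⟩ := hx
    intro q hq
    refine Submodule.subset_span ⟨Fin.snoc g q, ?_, ?_⟩
    · intro i
      refine Fin.lastCases ?_ ?_ i
      · rw [Fin.snoc_last]; exact hq
      · intro j; rw [Fin.snoc_castSucc]; exact hg j
    · rw [List.ofFn_succ', List.prod_concat]
      simp only [Fin.snoc_castSucc, Fin.snoc_last]
  | zero => intro q _; rw [zero_mul]; exact Submodule.zero_mem _
  | add x y hx hy ihx ihy =>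
    intro q hq
    rw [add_mul]
    exact Submodule.add_mem _ (ihx q hq) (ihy q hq)
  | smul m x hx ihx =>
    intro q hq
    have h1 : (m • x) * q = x * (m.unop * q) := by
      rw [MulOpposite.smul_eq_mul_unop, mul_assoc]
    rw [h1]
    exact ihx (m.unop * q) (h2s (Fin.last n) q hq m.unop)

lemma main_ind (hcyc : ∀ I : Submodule Aᵐᵒᵖ A, FinDimL (Submodule Aᵐᵒᵖ (A ⧸ I))) :
    ∀ (n : ℕ) (P : Fin n → Submodule Aᵐᵒᵖ A), (∀ i, IsTwoSidedR (P i)) →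
    (∀ i, ModHasKdim Aᵐᵒᵖ (A ⧸ P i)) →
    ¬ DChain {x : Submodule Aᵐᵒᵖ A // prodRIdeal P ≤ x} := by
  intro n
  induction n with
  | zero =>
    rintro P _ _ ⟨g, hg⟩
    have htop : ∀ s, (g s).1 = ⊤ := fun s =>
      top_le_iff.mp (by rw [← prodRIdeal_zero P]; exact (g s).2)
    have h1 : (g [false]).1 < (g []).1 := subval_lt (hg [false] [] dval_f_lt_nil)
    rw [htop [false], htop []] at h1
    exact lt_irrefl _ h1
  | succ n ih =>
    intro P h2s hk
    set K := prodRIdeal P with hK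
    set J := prodRIdeal (fun i : Fin n => P i.castSucc) with hJ
    have hKJ : K ≤ J := prodRIdeal_succ_le P
    have hJch : ¬ DChain {x : Submodule Aᵐᵒᵖ A // J ≤ x} :=
      ih _ (fun i => h2s _) (fun i => hk _)
    have hQch : ¬ DChain {x : Submodule Aᵐᵒᵖ A // P (Fin.last n) ≤ x} :=
      no_dchain_above _ (hk (Fin.last n))
    rintro ⟨g, hg⟩
    by_cases hdi : ∃ s t, dval s < dval t ∧ (g s).1 ⊓ J = (g t).1 ⊓ J
    · obtain ⟨s0, t0, hst, heq⟩ := hdi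
      set e := emb (dval s0) (dval t0) with he
      have hDs : Dyad (dval s0) := dval_dyad _
      have hDt : Dyad (dval t0) := dval_dyad _
      have hsp : ∀ w, dval s0 < dval (e w) ∧ dval (e w) < dval t0 :=
        fun w => emb_spec w hDs hDt hst
      have hconst : ∀ w, (g (e w)).1 ⊓ J = (g s0).1 ⊓ J := by
        intro w
        refine le_antisymm ?_ ?_
        · rw [heq]; exact inf_le_inf_right J (subval_lt (hg _ _ (hsp w).2)).le
        · exact inf_le_inf_right J (subval_lt (hg _ _ (hsp w).1)).le
      refine hJch ⟨fun w => ⟨(g (e w)).1 ⊔ J, le_sup_right⟩, ?_⟩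
      intro w w' hww
      have hlt : (g (e w)).1 < (g (e w')).1 :=
        subval_lt (hg _ _ (emb_mono w w' hDs hDt hst hww))
      refine Subtype.mk_lt_mk.mpr
        (lt_of_le_of_ne (sup_le_sup_right hlt.le J) fun hequ => ?_)
      have hinf : (g (e w)).1 ⊓ J = (g (e w')).1 ⊓ J := by
        rw [hconst w, hconst w']
      have hyx : (g (e w')).1 = (g (e w)).1 := by
        calc (g (e w')).1 = (g (e w')).1 ⊓ ((g (e w')).1 ⊔ J) :=
              (inf_eq_left.mpr le_sup_left).symm
          _ = (g (e w')).1 ⊓ ((g (e w)).1 ⊔ J) := by rw [hequ]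
          _ = ((g (e w)).1 ⊔ J) ⊓ (g (e w')).1 := inf_comm _ _
          _ = (g (e w)).1 ⊔ (J ⊓ (g (e w')).1) := sup_inf_assoc_of_le _ hlt.le
          _ = (g (e w)).1 ⊔ ((g (e w')).1 ⊓ J) := by rw [inf_comm]
          _ = (g (e w)).1 ⊔ ((g (e w)).1 ⊓ J) := by rw [← hinf]
          _ = (g (e w)).1 := sup_eq_left.mpr inf_le_left
      exact hlt.ne' hyx
    · push_neg at hdi
      refine engine hQch (prodRIdeal_mul_last P h2s) hcyc
        ⟨fun s => (g s).1 ⊓ J,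
         fun s t hst => lt_of_le_of_ne
           (inf_le_inf_right J (subval_lt (hg s t hst)).le) (hdi s t hst),
         fun s => le_inf (g s).2 hKJ,
         fun s => inf_le_right⟩

end Modules

end Aux10
theorem stmt10 (A : Type) [Ring A]
    (hcyc : ∀ I : Submodule Aᵐᵒᵖ A, FinDimL (Submodule Aᵐᵒᵖ (A ⧸ I)))
    (n : ℕ) (P : Fin n → Submodule Aᵐᵒᵖ A) (h2s : ∀ i, IsTwoSidedR (P i))
    (hk : ∀ i, ModHasKdim Aᵐᵒᵖ (A ⧸ P i)) :
    ModHasKdim Aᵐᵒᵖ (A ⧸ prodRIdeal P) :=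
  Aux10.good_quot_of_no_dchain _ (Aux10.main_ind hcyc n P h2s hk)
end

section
/- Let A be a commutative ring with Krull dimension. Then A decomposes as a finite direct product A ≅ A₁ × ... × Aₙ where each Aᵢ has Krull dimension and has no idempotent proper nonzero ideal. -/
open MulOpposite

/-!
Krull dimension forbids a densely ordered set of ideals, and an infinite family `δ` with
`δₘ δₙ = 0 ≠ δₙ²` would produce one, indexed by `ℚ`. Hence the Boolean algebra of idempotents of
`A` has no infinite chains: `1` is the finite sum of the primitive idempotents `eᵢ`, and
`A ≅ ∏ A ⧸ (1 - eᵢ)`. It remains to see that an idempotent ideal `J` is generated by an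
idempotent; in `A ⧸ (1 - eᵢ)` that idempotent is `0` or `1` by primitivity.

If `I = I²` lies in the Jacobson radical, the ideals `K = I K` are dense by Nakayama's lemma
(`J₁ + I x` lies strictly between `J₁ < J₂` for suitable `x ∈ J₂`), so `I = 0`. Applied in the
localizations at maximal ideals, this gives every `x ∈ J` a local unit `b ∈ J` with `b x = x`.
If `J ≠ 0` had no nonzero idempotent, local units would build a tower `cₙ` in `J` with
`cₙ cₙ₊₁ = cₙ` and `cₙ₊₁ (1 - cₙ)` never nilpotent, whose terms of even index are orthogonal.
So a maximal idempotent `e ∈ J` has `J (1 - e) = 0`, i.e. `J = (e)`.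
-/
theorem exists_seq_of_forall_exists {α : Type*} {p : α → Prop} {r : α → α → Prop}
    (h : ∀ a, p a → ∃ b, p b ∧ r a b) {a : α} (ha : p a) :
    ∃ f : ℕ → α, ∀ n, p (f n) ∧ r (f n) (f (n + 1)) := by
  choose! g hgp hgr using h
  have hp : ∀ n, p (g^[n] a) := fun n => by
    induction n with
    | zero => exact ha
    | succ n ih => rw [Function.iterate_succ_apply']; exact hgp _ ih
  refine ⟨fun n => g^[n] a, fun n => ⟨hp n, ?_⟩⟩
  simp only [Function.iterate_succ_apply']
  exact hgr _ (hp n)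

theorem DevLE.of_strictMono {α : Ordinal.{0}} {P Q : Type} [Preorder P] [Preorder Q] {φ : Q → P}
    (hφ : Monotone φ) (hφ' : StrictMono φ) (h : DevLE α P ‹_›) : DevLE α Q ‹_› := by
  induction α using WellFoundedLT.induction generalizing P Q with
  | _ α ih =>
    rw [DevLE] at h ⊢
    intro f hf
    obtain ⟨N, hN⟩ := h (φ ∘ f) fun n => hφ' (hf n)
    refine ⟨N, fun n hn => ?_⟩
    obtain ⟨β, hβ, hdev⟩ := hN n hn
    exact ⟨β, hβ, ih β hβ (φ := fun x => ⟨φ x, hφ x.2.1, hφ x.2.2⟩)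
      (fun _ _ hxy => hφ hxy) (fun _ _ hxy => hφ' hxy) hdev⟩

theorem HasKdimO.of_orderEmbedding {P Q : Type} [Preorder P] [Preorder Q] (e : Q ↪o P)
    (h : HasKdimO P) : HasKdimO Q :=
  let ⟨α, hα⟩ := h
  ⟨α, hα.of_strictMono e.monotone e.strictMono⟩

def HasDenseSubset (P : Type) [Preorder P] : Prop :=
  ∃ S : Set P, (∃ a ∈ S, ∃ b ∈ S, a < b) ∧ ∀ a ∈ S, ∀ b ∈ S, a < b → ∃ c ∈ S, a < c ∧ c < b

theorem DevLE.not_hasDenseSubset {α : Ordinal.{0}} {P : Type} [Preorder P] (h : DevLE α P ‹_›) :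
    ¬ HasDenseSubset P := by
  induction α using WellFoundedLT.induction generalizing P with
  | _ α ih =>
    rintro ⟨S, ⟨a, ha, b, hb, hab⟩, hS⟩
    obtain ⟨f, hf⟩ := exists_seq_of_forall_exists (p := fun x => x ∈ S ∧ a < x)
      (r := fun x y => y < x)
      (fun x ⟨hx, hax⟩ => let ⟨c, hc, hac, hcx⟩ := hS a ha x hx hax; ⟨c, ⟨hc, hac⟩, hcx⟩) ⟨hb, hab⟩
    rw [DevLE] at h
    obtain ⟨N, hN⟩ := h f fun n => (hf n).2
    obtain ⟨β, hβ, hdev⟩ := hN N le_rfl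
    refine ih β hβ hdev ⟨{x | x.1 ∈ S}, ⟨⟨f (N + 1), le_rfl, (hf N).2.le⟩, (hf (N + 1)).1.1,
      ⟨f N, (hf N).2.le, le_rfl⟩, (hf N).1.1, (hf N).2⟩, fun x hx y hy hxy => ?_⟩
    obtain ⟨c, hc, hxc, hcy⟩ := hS x.1 hx y.1 hy hxy
    exact ⟨⟨c, x.2.1.trans hxc.le, hcy.le.trans y.2.2⟩, hc, hxc, hcy⟩

theorem HasKdimO.not_hasDenseSubset {P : Type} [Preorder P] (h : HasKdimO P) :
    ¬ HasDenseSubset P :=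
  let ⟨_, hα⟩ := h
  hα.not_hasDenseSubset

theorem hasDenseSubset_of_strictMono {P : Type} [Preorder P] {f : ℚ → P} (hf : StrictMono f) :
    HasDenseSubset P := by
  refine ⟨Set.range f, ⟨f 0, ⟨0, rfl⟩, f 1, ⟨1, rfl⟩, hf zero_lt_one⟩, ?_⟩
  rintro _ ⟨p, rfl⟩ _ ⟨q, rfl⟩ hpq
  have hpq := hf.lt_iff_lt.mp hpq
  exact ⟨f ((p + q) / 2), ⟨_, rfl⟩, hf (by linarith), hf (by linarith)⟩

section Idempotents

variable {A : Type} [CommRing A]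

theorem isNilpotent_of_isNilpotent_mul_self_sub {I : Ideal A}
    (hI : ∀ e ∈ I, IsIdempotentElem e → e = 0) {c : A} (hc : c ∈ I)
    (hcc : IsNilpotent (c * c - c)) : IsNilpotent c := by
  let K := Ideal.span {c * c - c}
  have hKnil : K ≤ nilradical A := (Ideal.span_singleton_le_iff_mem _).mpr (mem_nilradical.mpr hcc)
  have hKI : K ≤ I :=
    (Ideal.span_singleton_le_iff_mem _).mpr (I.sub_mem (I.mul_mem_left c hc) hc)
  have hcK : IsIdempotentElem (Ideal.Quotient.mk K c) := by
    rw [IsIdempotentElem, ← map_mul, Ideal.Quotient.mk_eq_mk_iff_sub_mem]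
    exact Ideal.mem_span_singleton_self _
  obtain ⟨f, hf, hfc⟩ := exists_isIdempotentElem_eq_of_ker_isNilpotent (Ideal.Quotient.mk K)
    (fun y hy => mem_nilradical.mp (hKnil (Ideal.mk_ker (I := K) ▸ hy))) _ ⟨c, rfl⟩ hcK
  have hfcK : f - c ∈ K := Ideal.Quotient.mk_eq_mk_iff_sub_mem _ _ |>.mp hfc
  have hf0 : f = 0 := hI f (by simpa using I.add_mem (hKI hfcK) hc) hf
  rw [hf0, zero_sub] at hfcK
  exact mem_nilradical.mp (by simpa using hKnil hfcK)

theorem mul_eq_zero_of_disjoint {e f : {e : A // IsIdempotentElem e}} (h : Disjoint e f) :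
    (e : A) * f = 0 :=
  congrArg Subtype.val (disjoint_iff.mp h)

theorem completeOrthogonalIdempotents_of_forall_mem_iff_isAtom
    [IsAtomic {e : A // IsIdempotentElem e}] (s : Finset {e : A // IsIdempotentElem e})
    (hs : ∀ e, e ∈ s ↔ IsAtom e) : CompleteOrthogonalIdempotents fun e : s => ((e : _) : A) := by
  have horth : OrthogonalIdempotents fun e : s => ((e : _) : A) :=
    ⟨fun e => e.1.2, fun a b hab => mul_eq_zero_of_disjoint <|
      ((hs _).mp a.2).disjoint_of_ne ((hs _).mp b.2) fun h => hab (Subtype.ext h)⟩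
  refine ⟨horth, ?_⟩
  let t : {e : A // IsIdempotentElem e} := ⟨_, horth.isIdempotentElem_sum (s := Finset.univ)⟩
  obtain h | ⟨a, ha, hat⟩ := eq_bot_or_exists_atom_le tᶜ
  · have h' : 1 - (t : A) = 0 := congrArg Subtype.val h
    linear_combination -h'
  · have h1 : (a : A) * (1 - t) = a := hat
    have h2 : (a : A) * t = a := horth.mul_sum_of_mem (i := ⟨a, (hs a).mpr ha⟩) (Finset.mem_univ _)
    exact absurd (Subtype.ext (show (a : A) = 0 by linear_combination -h1 - h2)) ha.1

/-- An idempotent `ε = ȳ` of `A ⧸ (1 - e)` gives the idempotent `y e ≤ e` of `A`. -/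
theorem eq_zero_or_eq_one_of_isAtom {e : {e : A // IsIdempotentElem e}} (he : IsAtom e)
    {ε : A ⧸ Ideal.span {1 - (e : A)}} (hε : IsIdempotentElem ε) : ε = 0 ∨ ε = 1 := by
  obtain ⟨y, rfl⟩ := Ideal.Quotient.mk_surjective ε
  have hyy : y * y - y ∈ Ideal.span {1 - (e : A)} :=
    (Ideal.Quotient.mk_eq_mk_iff_sub_mem _ _).mp (by rw [map_mul]; exact hε)
  obtain ⟨u, hu⟩ := Ideal.mem_span_singleton'.mp hyy
  have hmk : Ideal.Quotient.mk (Ideal.span {1 - (e : A)}) e = 1 := by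
    rw [← map_one (Ideal.Quotient.mk _), Ideal.Quotient.mk_eq_mk_iff_sub_mem]
    exact Ideal.mem_span_singleton'.mpr ⟨-1, by ring⟩
  have hye : Ideal.Quotient.mk (Ideal.span {1 - (e : A)}) (y * e) = Ideal.Quotient.mk _ y := by
    rw [map_mul, hmk, mul_one]
  let g : {e : A // IsIdempotentElem e} :=
    ⟨y * e, by rw [IsIdempotentElem]; linear_combination (y * y - u) * e.2.eq - (e : A) * hu⟩
  rcases he.le_iff.mp (show (g : A) * e = g by linear_combination y * e.2.eq) with h | h
  · left
    rw [← hye, show y * e = 0 from congrArg Subtype.val h, map_zero]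
  · right
    rw [← hye, show y * e = e from congrArg Subtype.val h, hmk]

end Idempotents

namespace HasKdimO

variable {A : Type} [CommRing A]

theorem quotient (hk : HasKdimO (Ideal A)) (J : Ideal A) : HasKdimO (Ideal (A ⧸ J)) :=
  hk.of_orderEmbedding (Ideal.orderEmbeddingOfSurjective _ Ideal.Quotient.mk_surjective)

theorem localization (hk : HasKdimO (Ideal A)) (M : Submonoid A) (L : Type) [CommRing L]
    [Algebra A L] [IsLocalization M L] : HasKdimO (Ideal L) :=
  hk.of_orderEmbedding (IsLocalization.orderEmbedding M L)

/-- The ideals generated by `δ (encode s)` for rationals `s < r` form a chain of type `ℚ`,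
strictly increasing because `δ (encode r)` annihilates the `r`-th one but not itself. -/
theorem exists_mul_self_eq_zero (hk : HasKdimO (Ideal A)) {δ : ℕ → A}
    (hδ : Pairwise fun m n => δ m * δ n = 0) : ∃ n, δ n * δ n = 0 := by
  by_contra! hne
  refine hk.not_hasDenseSubset (hasDenseSubset_of_strictMono
    (f := fun r : ℚ => Ideal.span ((δ ∘ Encodable.encode) '' Set.Iio r)) fun p q hpq => ?_)
  refine lt_of_le_of_ne (Ideal.span_mono (Set.image_mono (Set.Iio_subset_Iio hpq.le)))
    fun heq => hne (Encodable.encode p) ?_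
  have hann : Ideal.span ((δ ∘ Encodable.encode) '' Set.Iio p) ≤
      (A ∙ δ (Encodable.encode p)).annihilator := by
    rw [Ideal.span_le]
    rintro _ ⟨s, hs, rfl⟩
    exact (Submodule.mem_annihilator_span_singleton _ _).mpr
      (hδ fun h => hs.ne (Encodable.encode_injective h))
  have hmem : δ (Encodable.encode p) ∈ Ideal.span ((δ ∘ Encodable.encode) '' Set.Iio p) := by
    dsimp only at heq
    rw [heq]
    exact Ideal.subset_span ⟨p, hpq, rfl⟩
  exact (Submodule.mem_annihilator_span_singleton _ _).mp (hann hmem)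

theorem exists_mul_self_eq_zero_of_mul_succ (hk : HasKdimO (Ideal A)) {c : ℕ → A}
    (hc : ∀ n, c n * c (n + 1) = c n) :
    ∃ n, c (n + 1) * (1 - c n) * (c (n + 1) * (1 - c n)) = 0 := by
  have hlt : ∀ i j, i < j → c i * c j = c i := by
    intro i j hij
    induction j, hij using Nat.le_induction with
    | base => exact hc i
    | succ j _ ih => linear_combination (1 - c (j + 1)) * ih + c i * hc j
  have hδ : Pairwise fun m n =>
      c (2 * m + 1) * (1 - c (2 * m)) * (c (2 * n + 1) * (1 - c (2 * n))) = 0 := by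
    have horth_of_lt : ∀ m n, m < n →
        c (2 * m + 1) * (1 - c (2 * m)) * (c (2 * n + 1) * (1 - c (2 * n))) = 0 := by
      intro m n hmn
      linear_combination (-(1 - c (2 * m)) * c (2 * n + 1)) * hlt (2 * m + 1) (2 * n) (by omega)
    intro m n hmn
    rcases hmn.lt_or_gt with h | h
    · exact horth_of_lt m n h
    · rw [mul_comm]; exact horth_of_lt n m h
  obtain ⟨n, hn⟩ := hk.exists_mul_self_eq_zero hδ
  exact ⟨2 * n, hn⟩

theorem wellFoundedGT_idempotents (hk : HasKdimO (Ideal A)) :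
    WellFoundedGT {e : A // IsIdempotentElem e} := by
  refine ⟨⟨fun e => by_contra fun hne => ?_⟩⟩
  obtain ⟨f, -, hf⟩ := not_acc_iff_exists_descending_chain.mp hne
  obtain ⟨n, hn⟩ := hk.exists_mul_self_eq_zero_of_mul_succ (c := fun n => (f n : A))
    fun n => (hf n).le
  have hδ : (f (n + 1) : A) * (1 - f n) = 0 :=
    ((f (n + 1)).2.mul (f n).2.one_sub).eq.symm.trans hn
  exact (hf n).not_ge (show (f (n + 1) : A) * f n = f (n + 1) by linear_combination -hδ)

theorem wellFoundedLT_idempotents (hk : HasKdimO (Ideal A)) :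
    WellFoundedLT {e : A // IsIdempotentElem e} :=
  have := hk.wellFoundedGT_idempotents
  (OrderIso.compl _).strictMono.wellFoundedLT

theorem eq_bot_of_isIdempotentElem_of_le_jacobson (hk : HasKdimO (Ideal A)) {I : Ideal A}
    (hI : IsIdempotentElem I) (hIj : I ≤ Ideal.jacobson ⊥) : I = ⊥ := by
  by_contra hne
  refine hk.not_hasDenseSubset
    ⟨{J | I * J = J}, ⟨⊥, Ideal.mul_bot I, I, hI, bot_lt_iff_ne_bot.mpr hne⟩, ?_⟩
  rintro J₁ (hJ₁ : I * J₁ = J₁) J₂ (hJ₂ : I * J₂ = J₂) hlt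
  obtain ⟨x, hx, hxJ₁⟩ : ∃ x ∈ J₂, ¬ I * Ideal.span {x} ≤ J₁ := by
    by_contra! h
    refine hlt.not_ge ?_
    rw [← hJ₂, Ideal.mul_le]
    exact fun i hi y hy => h y hy (Ideal.mul_mem_mul hi (Ideal.mem_span_singleton_self y))
  refine ⟨J₁ ⊔ I * Ideal.span {x}, ?_, left_lt_sup.mpr hxJ₁, lt_of_le_of_ne
    (sup_le hlt.le (Ideal.mul_le_right.trans ((Ideal.span_singleton_le_iff_mem _).mpr hx)))
    fun heq => hxJ₁ (Ideal.mul_le_right.trans ?_)⟩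
  · change I * (J₁ ⊔ I * Ideal.span {x}) = _
    rw [Ideal.mul_sup, hJ₁, ← mul_assoc, hI.eq]
  · refine Submodule.le_of_le_smul_of_le_jacobson_bot (Submodule.fg_span_singleton x) hIj ?_
    rw [Ideal.span_singleton_le_iff_mem, Ideal.smul_eq_mul, heq]
    exact hx

theorem exists_mul_eq_self (hk : HasKdimO (Ideal A)) {I : Ideal A} (hI : IsIdempotentElem I)
    {x : A} (hx : x ∈ I) : ∃ b ∈ I, b * x = x := by
  suffices htop : (A ∙ x).annihilator ⊔ I = ⊤ by
    obtain ⟨a, ha, b, hb, hab⟩ := Submodule.mem_sup.mp (htop ▸ Submodule.mem_top : (1 : A) ∈ _)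
    rw [Submodule.mem_annihilator_span_singleton, smul_eq_mul] at ha
    exact ⟨b, hb, by linear_combination x * hab - ha⟩
  by_contra hne
  obtain ⟨m, hm, hle⟩ := Ideal.exists_le_maximal _ hne
  let L := Localization.AtPrime m
  have hIL : I.map (algebraMap A L) = ⊥ := by
    refine (hk.localization m.primeCompl L).eq_bot_of_isIdempotentElem_of_le_jacobson ?_ ?_
    · change _ * _ = _
      rw [← Ideal.map_mul, hI.eq]
    · rw [IsLocalRing.jacobson_eq_maximalIdeal ⊥ bot_ne_top,
        ← Localization.AtPrime.map_eq_maximalIdeal]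
      exact Ideal.map_mono (le_sup_right.trans hle)
  have hx0 : algebraMap A L x = 0 := by
    simpa [hIL] using Ideal.mem_map_of_mem (algebraMap A L) hx
  obtain ⟨s, hs⟩ := (IsLocalization.map_eq_zero_iff m.primeCompl L x).mp hx0
  exact s.2 (hle (Submodule.mem_sup_left ((Submodule.mem_annihilator_span_singleton _ _).mpr hs)))

theorem eq_bot_of_isIdempotentElem_of_forall_isIdempotentElem (hk : HasKdimO (Ideal A))
    {I : Ideal A} (hI : IsIdempotentElem I) (h0 : ∀ e ∈ I, IsIdempotentElem e → e = 0) :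
    I = ⊥ := by
  have hunit : ∀ x ∈ I, ∀ y ∈ I, ∃ b ∈ I, b * x = x ∧ b * y = y := by
    intro x hx y hy
    obtain ⟨u, hu, hux⟩ := hk.exists_mul_eq_self hI hx
    obtain ⟨v, hv, hvy⟩ := hk.exists_mul_eq_self hI hy
    exact ⟨u + v - u * v, I.sub_mem (I.add_mem hu hv) (I.mul_mem_right v hu),
      by linear_combination (1 - v) * hux, by linear_combination (1 - u) * hvy⟩
  by_contra hne
  have hstep : ∀ c ∈ I, ∃ c' ∈ I, c * c' = c ∧ ¬ IsNilpotent (c' * (1 - c)) := by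
    intro c hc
    by_contra! hnil
    refine hne (hk.eq_bot_of_isIdempotentElem_of_le_jacobson hI
      (le_trans ?_ (Ideal.radical_le_jacobson (I := ⊥))))
    have hmul : ∀ x ∈ I, x * (1 - c) ∈ nilradical A := by
      intro x hx
      obtain ⟨b, hb, hbc, hbx⟩ := hunit c hc x hx
      rw [show x * (1 - c) = x * (b * (1 - c)) by linear_combination -(1 - c) * hbx]
      exact (nilradical A).mul_mem_left x (mem_nilradical.mpr (hnil b hb (by rw [mul_comm, hbc])))
    have hc0 : c ∈ nilradical A := mem_nilradical.mpr <|
      isNilpotent_of_isNilpotent_mul_self_sub h0 hc <| mem_nilradical.mp <| by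
        simpa [mul_sub] using (nilradical A).neg_mem (hmul c hc)
    intro x hx
    rw [show x = x * (1 - c) + x * c by ring]
    exact (nilradical A).add_mem (hmul x hx) ((nilradical A).mul_mem_left x hc0)
  obtain ⟨c, hc⟩ := exists_seq_of_forall_exists
    (r := fun c c' => c * c' = c ∧ ¬ IsNilpotent (c' * (1 - c))) hstep I.zero_mem
  obtain ⟨n, hn⟩ := hk.exists_mul_self_eq_zero_of_mul_succ fun n => (hc n).2.1
  exact (hc n).2.2 ⟨2, by rw [pow_two, hn]⟩

theorem exists_isIdempotentElem_eq_span (hk : HasKdimO (Ideal A)) {J : Ideal A}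
    (hJ : IsIdempotentElem J) : ∃ e : A, IsIdempotentElem e ∧ J = Ideal.span {e} := by
  have := hk.wellFoundedGT_idempotents
  obtain ⟨e, heJ, hmax⟩ := wellFounded_gt.has_min {e : {e : A // IsIdempotentElem e} | e.1 ∈ J}
    ⟨⊥, J.zero_mem⟩
  have hle : ∀ g : {e : A // IsIdempotentElem e}, g.1 ∈ J → (g : A) * e = g := fun g hg =>
    le_sup_right.trans (le_sup_left.eq_of_not_lt (hmax (e ⊔ g)
      (J.sub_mem (J.add_mem heJ hg) (J.mul_mem_left _ hg)))).ge
  have hJ' : J * Ideal.span {1 - (e : A)} = ⊥ := by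
    refine hk.eq_bot_of_isIdempotentElem_of_forall_isIdempotentElem ?_ fun g hg hgg => ?_
    · rw [IsIdempotentElem, mul_mul_mul_comm, hJ.eq, Ideal.span_singleton_mul_span_singleton,
        e.2.one_sub.eq]
    · obtain ⟨t, ht⟩ := Ideal.mem_span_singleton'.mp (Ideal.mul_le_right hg)
      have hge := hle ⟨g, hgg⟩ (Ideal.mul_le_left hg)
      linear_combination -hge - (e : A) * ht - t * e.2.eq
  refine ⟨e, e.2, le_antisymm (fun x hx => ?_) ((Ideal.span_singleton_le_iff_mem _).mpr heJ)⟩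
  have hx0 : x * (1 - e) = 0 := by
    simpa [hJ'] using Ideal.mul_mem_mul hx (Ideal.mem_span_singleton_self (1 - (e : A)))
  exact Ideal.mem_span_singleton'.mpr ⟨x, by linear_combination -hx0⟩

theorem finite_setOf_isAtom (hk : HasKdimO (Ideal A)) :
    {e : {e : A // IsIdempotentElem e} | IsAtom e}.Finite := by
  by_contra hinf
  let f := Set.Infinite.natEmbedding _ hinf
  obtain ⟨n, hn⟩ :=
    hk.exists_mul_self_eq_zero (δ := fun n => ((f n : {e : A // IsIdempotentElem e}) : A))
    fun m n hmn => mul_eq_zero_of_disjoint ((f m).2.disjoint_of_ne (f n).2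
      fun h => hmn (f.injective (Subtype.ext h)))
  exact (f n).2.1 (Subtype.ext ((f n).1.2.eq.symm.trans hn))

theorem eq_bot_or_eq_top_of_isAtom (hk : HasKdimO (Ideal A))
    {e : {e : A // IsIdempotentElem e}} (he : IsAtom e) {J : Ideal (A ⧸ Ideal.span {1 - (e : A)})}
    (hJ : IsIdempotentElem J) : J = ⊥ ∨ J = ⊤ := by
  obtain ⟨ε, hε, rfl⟩ := (hk.quotient _).exists_isIdempotentElem_eq_span hJ
  rcases eq_zero_or_eq_one_of_isAtom he hε with rfl | rfl
  · exact Or.inl (Ideal.span_singleton_eq_bot.mpr rfl)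
  · exact Or.inr Ideal.span_singleton_one

end HasKdimO

theorem stmt15 (A : Type) [CommRing A] (h : HasKdimO (Ideal A)) :
    ∃ (n : ℕ) (B : Fin n → Type) (hB : ∀ i, CommRing (B i)),
      Nonempty (A ≃+* ((i : Fin n) → B i)) ∧
      ∀ i, letI := hB i
        HasKdimO (Ideal (B i)) ∧
          ∀ J : Ideal (B i), J ≠ ⊥ → J ≠ ⊤ → J * J ≠ J := by
  have := h.wellFoundedLT_idempotents
  let s := h.finite_setOf_isAtom.toFinset
  let E : Fin s.card → {e : A // IsIdempotentElem e} := fun i => s.equivFin.symm i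
  have hE := (CompleteOrthogonalIdempotents.equiv s.equivFin.symm).mpr
    (completeOrthogonalIdempotents_of_forall_mem_iff_isAtom s
      fun _ => h.finite_setOf_isAtom.mem_toFinset)
  refine ⟨s.card, fun i => A ⧸ Ideal.span {1 - (E i : A)}, fun _ => inferInstance,
    ⟨RingEquiv.ofBijective _ hE.bijective_pi⟩, fun i => ⟨h.quotient _, fun J hJ0 hJ1 hJJ => ?_⟩⟩
  have hat : IsAtom (E i) := h.finite_setOf_isAtom.mem_toFinset.mp (s.equivFin.symm i).2
  exact (h.eq_bot_or_eq_top_of_isAtom hat hJJ).elim hJ0 hJ1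
end
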